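/- arXiv:2510.05009 — 7 statements merged into one kernel-verified Lean document; each statement's English description precedes it below -/
import Mathlib

section
/- Let ω be an open set in ℝⁿ, q ∈ {0,…,n−1}, and let u : ω → [−∞,+∞) be upper semicontinuous. Then u is real q-convex on ω if and only if u is locally real q-convex on ω, i.e., for every point p ∈ ω there exists an open neighborhood V of p with V ⊆ ω such that the restriction of u to V is real q-convex on V. -/
/-! Suppose `u ≤ l` on `∂B ∩ π` but `u x > l x` at some `x ∈ cl(B) ∩ π`, `B = B(c, r)`. For small
`ε > 0` the upper semicontinuous function `u - l + ε‖· - c‖²` still exceeds its boundary values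
somewhere, so it attains its maximum over `cl(B) ∩ π` at an interior point `x₀`. Since
`‖y - c‖² - ‖y - x₀‖²` is affine in `y`, on a small sphere `∂B(x₀, ρ) ∩ π` the concave function
`l - ε‖· - c‖² + const` bounding `u` coincides with an affine function whose value at `x₀` is
`ερ²` below the maximum. Local real q-convexity at `x₀` therefore pushes `u x₀` below itself. -/

open Metric Set Filter

noncomputable section

/-- An upper semicontinuous function `u : ω → [−∞,+∞)` (EReal-valued, never `⊤` on `ω`)
is *real q-convex* on `ω` if it satisfies the local maximum property with respect to
affine linear functions on real `(q+1)`-dimensional affine subspaces. -/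
def RealQConvexOn {E : Type*} [NormedAddCommGroup E] [NormedSpace ℝ E]
    (q : ℕ) (u : E → EReal) (ω : Set E) : Prop :=
  (∀ x ∈ ω, u x ≠ ⊤) ∧ UpperSemicontinuousOn u ω ∧
    ∀ P : AffineSubspace ℝ E, Module.finrank ℝ P.direction = q + 1 →
      ∀ (c : E) (r : ℝ), 0 < r → closure (Metric.ball c r) ⊆ ω →
        ∀ l : E →ᵃ[ℝ] ℝ,
          (∀ x ∈ Metric.sphere c r ∩ (P : Set E), u x ≤ (l x : EReal)) →
          ∀ x ∈ Metric.closedBall c r ∩ (P : Set E), u x ≤ (l x : EReal)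

open scoped Topology

lemma EReal.add_coe_le_coe_iff {a : EReal} {x y : ℝ} : a + x ≤ y ↔ a ≤ ((y - x : ℝ) : EReal) := by
  rw [EReal.coe_sub,
    EReal.le_sub_iff_add_le (.inl (EReal.coe_ne_bot x)) (.inl (EReal.coe_ne_top x))]

section InnerProductSpace

variable {E : Type*} [NormedAddCommGroup E] [InnerProductSpace ℝ E]

lemma exists_affineMap_eq_sq_norm_sub_sub_sq_norm_sub (c x₀ : E) :
    ∃ T : E →ᵃ[ℝ] ℝ, ∀ y, T y = ‖y - c‖ ^ 2 - ‖y - x₀‖ ^ 2 :=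
  ⟨((2 : ℝ) • innerSL ℝ (x₀ - c)).toLinearMap.toAffineMap +
      AffineMap.const ℝ E (‖c‖ ^ 2 - ‖x₀‖ ^ 2),
    fun y => by
      simp only [AffineMap.coe_add, AffineMap.coe_const, Pi.add_apply, Function.const_apply,
        LinearMap.coe_toAffineMap, ContinuousLinearMap.coe_coe, smul_apply,
        innerSL_apply_apply, smul_eq_mul, inner_sub_left]
      rw [norm_sub_sq_real, norm_sub_sq_real, real_inner_comm x₀, real_inner_comm c]
      ring⟩

theorem RealQConvexOn.le_sub_sq_norm_of_le_on_sphere {q : ℕ} {u : E → EReal} {V : Set E}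
    (hu : RealQConvexOn q u V) {P : AffineSubspace ℝ E}
    (hP : Module.finrank ℝ P.direction = q + 1) {x₀ : E} (hx₀ : x₀ ∈ P) {ρ : ℝ} (hρ : 0 < ρ)
    (hV : closedBall x₀ ρ ⊆ V) (l : E →ᵃ[ℝ] ℝ) (c : E) (ε : ℝ)
    (hle : ∀ y ∈ sphere x₀ ρ ∩ (P : Set E), u y ≤ ((l y - ε * ‖y - c‖ ^ 2 : ℝ) : EReal)) :
    u x₀ ≤ ((l x₀ - ε * ‖x₀ - c‖ ^ 2 - ε * ρ ^ 2 : ℝ) : EReal) := by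
  obtain ⟨T, hT⟩ := exists_affineMap_eq_sq_norm_sub_sub_sq_norm_sub c x₀
  have hl' : ∀ y, (l - ε • T - AffineMap.const ℝ E (ε * ρ ^ 2) : E →ᵃ[ℝ] ℝ) y
      = l y - ε * (‖y - c‖ ^ 2 - ‖y - x₀‖ ^ 2) - ε * ρ ^ 2 := by
    simp [hT]
  have key := hu.2.2 P hP x₀ ρ hρ (by rwa [closure_ball x₀ hρ.ne']) _
    (fun y hy => (hle y hy).trans_eq <| by
      rw [hl', ← dist_eq_norm y x₀, mem_sphere.mp hy.1]; ring_nf)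
    x₀ ⟨mem_closedBall_self hρ.le, hx₀⟩
  rwa [hl', sub_self, norm_zero, zero_pow two_ne_zero, sub_zero] at key

variable [FiniteDimensional ℝ E]

lemma exists_mem_ball_isMaxOn_add_sq_norm {u : E → EReal} {P : AffineSubspace ℝ E} {c : E}
    {r : ℝ} (hu : UpperSemicontinuousOn u (closedBall c r ∩ P)) (l : E →ᵃ[ℝ] ℝ)
    (hsph : ∀ y ∈ sphere c r ∩ (P : Set E), u y ≤ l y) {x : E}
    (hx : x ∈ closedBall c r ∩ (P : Set E)) (hlt : (l x : EReal) < u x) :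
    ∃ ε > 0, ∃ x₀ ∈ ball c r ∩ (P : Set E), u x₀ ≠ ⊥ ∧
      IsMaxOn (fun y => u y + ((ε * ‖y - c‖ ^ 2 - l y : ℝ) : EReal)) (closedBall c r ∩ P) x₀ := by
  set K := closedBall c r ∩ (P : Set E)
  obtain ⟨s, hls, hsu⟩ := EReal.lt_iff_exists_real_btwn.mp hlt
  rw [EReal.coe_lt_coe_iff] at hls
  set ε := (s - l x) / (r ^ 2 + 1)
  have hε : 0 < ε := div_pos (by linarith) (by positivity)
  have hεr : ε * r ^ 2 < s - l x := by
    rw [div_mul_eq_mul_div, div_lt_iff₀ (by positivity)]; nlinarith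
  set φ : E → ℝ := fun y => ε * ‖y - c‖ ^ 2 - l y
  have hφ : Continuous φ := by have := l.continuous_of_finiteDimensional; fun_prop
  have hK : IsCompact K := (isCompact_closedBall c r).inter_right P.closed_of_finiteDimensional
  have husc : UpperSemicontinuousOn (fun y => u y + (φ y : EReal)) K :=
    hu.add' ((continuous_coe_real_ereal.comp hφ).upperSemicontinuous.upperSemicontinuousOn _)
      fun y _ => EReal.continuousAt_add (.inr (EReal.coe_ne_bot _)) (.inr (EReal.coe_ne_top _))
  obtain ⟨x₀, hx₀, hmax⟩ := husc.exists_isMaxOn ⟨x, hx⟩ hK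
  have hφx : ε * r ^ 2 < s + φ x := by
    have : 0 ≤ ε * ‖x - c‖ ^ 2 := by positivity
    simp only [φ]
    linarith
  have hx_big : ((ε * r ^ 2 : ℝ) : EReal) < u x + φ x :=
    calc ((ε * r ^ 2 : ℝ) : EReal) < s + φ x := by exact_mod_cast hφx
      _ < u x + φ x := EReal.add_lt_add_right_coe hsu _
  have hx₀_big : ((ε * r ^ 2 : ℝ) : EReal) < u x₀ + φ x₀ := hx_big.trans_le (hmax hx)
  have hbot : u x₀ ≠ ⊥ := fun h => by
    rw [h, EReal.bot_add] at hx₀_big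
    exact not_lt_bot hx₀_big
  refine ⟨ε, hε, x₀, ⟨?_, hx₀.2⟩, hbot, hmax⟩
  refine (mem_closedBall.mp hx₀.1).lt_of_ne fun hr => hx₀_big.not_ge ?_
  calc u x₀ + φ x₀ ≤ ((l x₀ + φ x₀ : ℝ) : EReal) := by
        rw [EReal.coe_add]; gcongr; exact hsph x₀ ⟨hr, hx₀.2⟩
    _ = ((ε * r ^ 2 : ℝ) : EReal) := by simp only [φ, ← hr, dist_eq_norm]; ring_nf

theorem realQConvexOn_of_forall_exists_mem_nhds {q : ℕ} {u : E → EReal} {ω : Set E}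
    (husc : UpperSemicontinuousOn u ω) (htop : ∀ x ∈ ω, u x ≠ ⊤)
    (hloc : ∀ p ∈ ω, ∃ V ∈ 𝓝 p, RealQConvexOn q u V) : RealQConvexOn q u ω := by
  refine ⟨htop, husc, fun P hP c r hr hsub l hsph x hx => ?_⟩
  rw [closure_ball c hr.ne'] at hsub
  by_contra! hlt
  obtain ⟨ε, hε, x₀, ⟨hx₀c, hx₀P⟩, hbot, hmax⟩ :=
    exists_mem_ball_isMaxOn_add_sq_norm (husc.mono (inter_subset_left.trans hsub)) l hsph hx hlt
  have hx₀ω : x₀ ∈ ω := hsub (ball_subset_closedBall hx₀c)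
  obtain ⟨V, hV, hconv⟩ := hloc x₀ hx₀ω
  obtain ⟨ρ, hρ, hρV⟩ := nhds_basis_closedBall.mem_iff.mp hV
  set ρ' := min ρ (r - dist x₀ c)
  have hρ' : 0 < ρ' := lt_min hρ (sub_pos.mpr (mem_ball.mp hx₀c))
  have hρ'c : closedBall x₀ ρ' ⊆ closedBall c r :=
    closedBall_subset_closedBall' (by linarith [min_le_right ρ (r - dist x₀ c)])
  set t := (u x₀).toReal
  have ht : u x₀ = t := (EReal.coe_toReal (htop x₀ hx₀ω) hbot).symm
  have key := hconv.le_sub_sq_norm_of_le_on_sphere hP hx₀P hρ'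
    ((closedBall_subset_closedBall (min_le_left _ _)).trans hρV)
    (l + AffineMap.const ℝ E (t + (ε * ‖x₀ - c‖ ^ 2 - l x₀))) c ε fun y hy => by
      have hy' : u y + ((ε * ‖y - c‖ ^ 2 - l y : ℝ) : EReal)
          ≤ u x₀ + ((ε * ‖x₀ - c‖ ^ 2 - l x₀ : ℝ) : EReal) :=
        hmax ⟨hρ'c (sphere_subset_closedBall hy.1), hy.2⟩
      rw [ht, ← EReal.coe_add, EReal.add_coe_le_coe_iff] at hy'
      convert hy' using 2
      simp only [AffineMap.coe_add, AffineMap.coe_const, Pi.add_apply, Function.const_apply]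
      ring
  rw [ht, EReal.coe_le_coe_iff] at key
  simp only [AffineMap.coe_add, AffineMap.coe_const, Pi.add_apply, Function.const_apply] at key
  nlinarith [mul_pos hε (pow_pos hρ' 2)]

end InnerProductSpace

theorem realQConvexOn_iff_locally_general {n q : ℕ}
    (ω : Set (EuclideanSpace ℝ (Fin n))) (hω : IsOpen ω)
    (u : EuclideanSpace ℝ (Fin n) → EReal)
    (husc : UpperSemicontinuousOn u ω) (htop : ∀ x ∈ ω, u x ≠ ⊤) :
    RealQConvexOn q u ω ↔
      ∀ p ∈ ω, ∃ V, IsOpen V ∧ p ∈ V ∧ V ⊆ ω ∧ RealQConvexOn q u V := by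
  refine ⟨fun h p hp => ⟨ω, hω, hp, subset_rfl, h⟩, fun hloc => ?_⟩
  refine realQConvexOn_of_forall_exists_mem_nhds husc htop fun p hp => ?_
  obtain ⟨V, hV, hpV, -, hconv⟩ := hloc p hp
  exact ⟨V, hV.mem_nhds hpV, hconv⟩

/-- Real q-convexity is a local property: an upper semicontinuous function is
real q-convex on an open set `ω ⊆ ℝⁿ` iff it is locally real q-convex on `ω`. -/
theorem realQConvexOn_iff_locally {n q : ℕ} (hq : q < n)
    (ω : Set (EuclideanSpace ℝ (Fin n))) (hω : IsOpen ω)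
    (u : EuclideanSpace ℝ (Fin n) → EReal)
    (husc : UpperSemicontinuousOn u ω) (htop : ∀ x ∈ ω, u x ≠ ⊤) :
    RealQConvexOn q u ω ↔
      ∀ p ∈ ω, ∃ V, IsOpen V ∧ p ∈ V ∧ V ⊆ ω ∧ RealQConvexOn q u V :=
  realQConvexOn_iff_locally_general ω hω u husc htop
end
end

section
/- Maximum principle: Let q ∈ {0,…,n−1} and let ω be a nonempty, relatively compact open set in ℝⁿ. If u is real q-convex on ω and upper semicontinuous on the closure cl(ω), then max{u(x) : x ∈ cl(ω)} = max{u(x) : x ∈ ∂ω}. -/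
open Metric Set Filter

noncomputable section

/-!
Let `z` maximize `u` over the compact set `closure ω`. If `u z` exceeded every value of `u` on
`frontier ω`, the maximum set `K` of `u` would be a nonempty compact subset of `ω`. At a point
`x ∈ K` of maximal norm, `K` lies in the ball `closedBall 0 ‖x‖`, so on a small sphere around `x`
the points of `K` satisfy `⟪x, y - x⟫ ≤ -r² / 2`. On the cap `⟪x, y - x⟫ ≥ -r² / 4` of the sphere,
`u` therefore stays below some `b < u z` by semicontinuity, and an affine function decreasing
steeply in the direction `x` dominates `u` on the sphere within any `(q+1)`-plane through `x` while
lying strictly below `u x` at `x`, contradicting real `q`-convexity.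
-/

open scoped RealInnerProductSpace

theorem Submodule.exists_finrank_eq {K V : Type*} [DivisionRing K] [AddCommGroup V]
    [Module K V] {k : ℕ} (hk : k ≤ Module.finrank K V) :
    ∃ W : Submodule K V, Module.finrank K W = k := by
  obtain ⟨f, hf⟩ := exists_linearIndependent_of_le_finrank hk
  exact ⟨Submodule.span K (range f), (finrank_span_eq_card hf).trans (Fintype.card_fin k)⟩

theorem UpperSemicontinuousOn.exists_forall_le_of_forall_lt {X : Type*} [TopologicalSpace X]
    {u : X → EReal} {C : Set X} (hu : UpperSemicontinuousOn u C) (hC : IsCompact C) {s : ℝ}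
    (hlt : ∀ y ∈ C, u y < s) : ∃ b : ℝ, b < s ∧ ∀ y ∈ C, u y ≤ b := by
  rcases C.eq_empty_or_nonempty with rfl | hne
  · exact ⟨s - 1, by linarith, by simp⟩
  obtain ⟨y₀, hy₀, hmax⟩ := hu.exists_isMaxOn hne hC
  obtain ⟨b, hy₀b, hbs⟩ := EReal.exists_between_coe_real (hlt y₀ hy₀)
  exact ⟨b, EReal.coe_lt_coe_iff.1 hbs, fun y hy => (hmax hy).trans hy₀b.le⟩

section

variable {E : Type*} [NormedAddCommGroup E]

theorem IsCompact.exists_forall_inner_sub_le [InnerProductSpace ℝ E] {K : Set E}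
    (hK : IsCompact K) (hne : K.Nonempty) :
    ∃ x ∈ K, ∀ y ∈ K, ⟪x, y - x⟫ ≤ -‖y - x‖ ^ 2 / 2 := by
  obtain ⟨x, hxK, hmax⟩ := hK.exists_isMaxOn hne continuous_norm.continuousOn
  refine ⟨x, hxK, fun y hy => ?_⟩
  have hyx : ‖y‖ ≤ ‖x‖ := hmax hy
  rw [norm_sub_sq_real, inner_sub_right, real_inner_self_eq_norm_sq, real_inner_comm]
  nlinarith [norm_nonneg y]

variable {q : ℕ} {u : E → EReal} {ω : Set E}

/-- The affine barrier `l` dominates `u` on `sphere c r ∩ P`: it is `≥ b` on the cap, where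
`u ≤ b < s`, and `≥ s` off the cap, where `φ` is small; but `l c = s - μ γ < s`. -/
theorem RealQConvexOn.lt_of_lt_on_cap [NormedSpace ℝ E] [FiniteDimensional ℝ E]
    (hu : RealQConvexOn q u ω) {P : AffineSubspace ℝ E}
    (hP : Module.finrank ℝ P.direction = q + 1) {c : E} (hc : c ∈ P) {r : ℝ} (hr : 0 < r)
    (hball : closedBall c r ⊆ ω) (φ : E →ᵃ[ℝ] ℝ) {γ s : ℝ} (hγ : 0 < γ)
    (hle : ∀ y ∈ sphere c r ∩ P, u y ≤ s)
    (hlt : ∀ y ∈ sphere c r ∩ P, φ c - γ ≤ φ y → u y < s) : u c < s := by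
  have hφ : Continuous φ :=
    AffineMap.continuous_linear_iff.1 φ.linear.continuous_of_finiteDimensional
  have hC : IsCompact (sphere c r ∩ P ∩ {y | φ c - γ ≤ φ y}) :=
    ((isCompact_sphere c r).inter_right P.closed_of_finiteDimensional).inter_right
      (isClosed_le continuous_const hφ)
  obtain ⟨b, hbs, hb⟩ := (hu.2.1.mono fun y hy => hball (sphere_subset_closedBall hy.1.1)
    ).exists_forall_le_of_forall_lt hC fun y hy => hlt y hy.1 hy.2
  obtain ⟨B, hB⟩ := (isCompact_sphere c r).bddAbove_image hφ.continuousOn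
  set δ := max (B - φ c) 0 + γ
  set μ := (s - b) / δ
  have hμ : 0 < μ := div_pos (by linarith) (by positivity)
  have hμδ : μ * δ = s - b := div_mul_cancel₀ _ (by positivity)
  set l : E →ᵃ[ℝ] ℝ := AffineMap.const ℝ E (s - μ * γ + μ * φ c) - μ • φ
  have hl : ∀ y, l y = s - μ * γ - μ * (φ y - φ c) := fun y => by simp [l]; ring
  have hsphere : ∀ y ∈ sphere c r ∩ P, u y ≤ (l y : EReal) := by
    intro y hy
    rw [hl]
    by_cases hcap : φ c - γ ≤ φ y
    · refine (hb y ⟨hy, hcap⟩).trans (EReal.coe_le_coe_iff.2 ?_)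
      have hyB : φ y ≤ B := hB (mem_image_of_mem φ hy.1)
      nlinarith [le_max_left (B - φ c) 0]
    · refine (hle y hy).trans (EReal.coe_le_coe_iff.2 ?_)
      nlinarith
  have hc_le := hu.2.2 P hP c r hr (by rwa [closure_ball c hr.ne']) l hsphere c
    ⟨mem_closedBall_self hr.le, hc⟩
  rw [hl, sub_self, mul_zero, sub_zero] at hc_le
  exact hc_le.trans_lt (EReal.coe_lt_coe_iff.2 (by nlinarith))

theorem RealQConvexOn.setOf_le_eq_empty_of_isCompact [InnerProductSpace ℝ E]
    [FiniteDimensional ℝ E] (hu : RealQConvexOn q u ω) (hq : q < Module.finrank ℝ E)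
    (hω : IsOpen ω) {M : EReal} (hM : M ≠ ⊥) (hle : ∀ x ∈ ω, u x ≤ M)
    (hK : IsCompact {x ∈ ω | M ≤ u x}) :
    {x ∈ ω | M ≤ u x} = ∅ := by
  by_contra hne
  obtain ⟨x, ⟨hxω, hxM⟩, hx⟩ := hK.exists_forall_inner_sub_le (nonempty_iff_ne_empty.2 hne)
  lift M to ℝ using ⟨ne_top_of_le_ne_top (hu.1 x hxω) hxM, hM⟩
  obtain ⟨r, hr, hball⟩ := nhds_basis_closedBall.mem_iff.1 (hω.mem_nhds hxω)
  obtain ⟨W, hW⟩ := Submodule.exists_finrank_eq (K := ℝ) (V := E) (k := q + 1) hq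
  refine (hu.lt_of_lt_on_cap (P := .mk' x W) (by rwa [AffineSubspace.direction_mk'])
    (AffineSubspace.self_mem_mk' x W) hr hball (innerSL ℝ x).toLinearMap.toAffineMap
    (γ := r ^ 2 / 4) (by positivity) (fun y hy => hle y (hball (sphere_subset_closedBall hy.1)))
    fun y hy hcap => lt_of_not_ge fun hyM => ?_).not_ge hxM
  have hxy := hx y ⟨hball (sphere_subset_closedBall hy.1), hyM⟩
  have hyr : ‖y - x‖ = r := by simpa [dist_eq_norm] using hy.1
  simp only [LinearMap.coe_toAffineMap, ContinuousLinearMap.coe_coe, innerSL_apply_apply] at hcap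
  rw [inner_sub_right, hyr] at hxy
  nlinarith

end

theorem realQConvexOn_maximum_principle_general {n q : ℕ} (hq : q < n)
    (ω : Set (EuclideanSpace ℝ (Fin n))) (hω : IsOpen ω) (hne : ω.Nonempty)
    (hbd : Bornology.IsBounded ω)
    (u : EuclideanSpace ℝ (Fin n) → EReal)
    (hu : RealQConvexOn q u ω)
    (husc : UpperSemicontinuousOn u (closure ω)) :
    sSup (u '' closure ω) = sSup (u '' frontier ω) := by
  refine le_antisymm ?_ (sSup_le_sSup (image_mono frontier_subset_closure))
  obtain ⟨z, hz, hzmax⟩ := husc.exists_isMaxOn hne.closure hbd.isCompact_closure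
  refine sSup_le (forall_mem_image.2 fun y hy => (hzmax hy).trans ?_)
  rcases eq_or_ne (u z) ⊥ with hbot | hbot
  · simp [hbot]
  by_contra! hfr
  have hfrz : ∀ x ∈ frontier ω, u x < u z := fun x hx =>
    (le_sSup (mem_image_of_mem u hx)).trans_lt hfr
  have hmax_set : {x ∈ ω | u z ≤ u x} = closure ω ∩ u ⁻¹' Ici (u z) := by
    ext x
    refine ⟨fun hx => ⟨subset_closure hx.1, hx.2⟩, fun hx => ⟨?_, hx.2⟩⟩
    rw [← hω.interior_eq, ← closure_sdiff_frontier]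
    exact ⟨hx.1, fun hfx => (hfrz x hfx).not_ge hx.2⟩
  have hempty := hu.setOf_le_eq_empty_of_isCompact (by simpa using hq) hω hbot
    (fun x hx => hzmax (subset_closure hx))
    (hmax_set ▸ husc.isCompact_inter_preimage_Ici hbd.isCompact_closure (u z))
  rw [hmax_set] at hempty
  exact hempty.subset (⟨hz, le_refl (u z)⟩ : z ∈ closure ω ∩ u ⁻¹' Ici (u z))

/-- Maximum principle: if `u` is real q-convex on a nonempty relatively compact open set
`ω ⊆ ℝⁿ` and upper semicontinuous up to the closure of `ω`, then the maximum of `u` over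
the closure of `ω` equals its maximum over the boundary of `ω`. -/
theorem realQConvexOn_maximum_principle {n q : ℕ} (hq : q < n)
    (ω : Set (EuclideanSpace ℝ (Fin n))) (hω : IsOpen ω) (hne : ω.Nonempty)
    (hbd : Bornology.IsBounded ω)
    (u : EuclideanSpace ℝ (Fin n) → EReal)
    (hu : RealQConvexOn q u ω)
    (husc : UpperSemicontinuousOn u (closure ω)) (htop : ∀ x ∈ closure ω, u x ≠ ⊤) :
    sSup (u '' closure ω) = sSup (u '' frontier ω) :=
  realQConvexOn_maximum_principle_general hq ω hω hne hbd u hu husc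
end
end

section
/- Gluing theorem: Let ω₁ and ω be open sets in ℝⁿ with ω₁ ⊆ ω, let u be real q-convex on ω, and let u₁ be real q-convex on ω₁, such that limsup_{y→x, y∈ω₁} u₁(y) ≤ u(x) for every x ∈ ∂ω₁ ∩ ω. Then the function ψ defined by ψ(x) = max{u(x), u₁(x)} for x ∈ ω₁ and ψ(x) = u(x) for x ∈ ω∖ω₁ is real q-convex on ω. -/
/-!
The limsup condition on `∂ω₁` is exactly what makes the glued function `ψ` upper
semicontinuous. For the maximum property, suppose `ψ > l` somewhere on `B̄ ∩ π`. Since `u ≤ ψ`,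
the q-convexity of `u` gives `u ≤ l` on `B̄ ∩ π`, so every maximum point of `ψ - l` on `B̄ ∩ π`
lies in `ω₁ ∩ B` and there `ψ = u₁`. Among the maximum points take `x₀` farthest from the
origin: tilting `l + max (ψ - l)` by a small multiple of `⟪x₀, · - x₀⟫` gives an affine function
that dominates `ψ ≥ u₁` on a small sphere around `x₀` in `π` but lies strictly below
`ψ x₀ = u₁ x₀`, contradicting the q-convexity of `u₁`.
-/

open Metric Set Filter

noncomputable section

open Topology

theorem upperSemicontinuousOn_ite_max {α β : Type*} [TopologicalSpace α] [CompleteLinearOrder β]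
    {ω ω₁ : Set α} [DecidablePred (· ∈ ω₁)] {u u₁ : α → β}
    (hu : UpperSemicontinuousOn u ω) (hu₁ : UpperSemicontinuousOn u₁ ω₁)
    (hlim : ∀ x ∈ frontier ω₁ ∩ ω, limsup u₁ (𝓝[ω₁] x) ≤ u x) :
    UpperSemicontinuousOn (fun x => if x ∈ ω₁ then max (u x) (u₁ x) else u x) ω := by
  intro x hx y hy
  beta_reduce at hy
  have hu₁y : ∀ᶠ z in 𝓝[ω₁] x, u₁ z < y := by
    by_cases hx₁ : x ∈ ω₁
    · simp only [hx₁, if_true, max_lt_iff] at hy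
      exact hu₁ x hx₁ y hy.2
    by_cases hcl : x ∈ closure ω₁
    · simp only [hx₁, if_false] at hy
      exact eventually_lt_of_limsup_lt
        ((hlim x ⟨⟨hcl, fun h => hx₁ (interior_subset h)⟩, hx⟩).trans_lt hy)
    · simp [notMem_closure_iff_nhdsWithin_eq_bot.1 hcl]
  have huy : u x < y := by
    refine lt_of_le_of_lt ?_ hy
    split_ifs
    exacts [le_max_left _ _, le_rfl]
  filter_upwards [hu x hx y huy, eventually_nhdsWithin_iff.1 hu₁y |>.filter_mono nhdsWithin_le_nhds]
    with z hz hz₁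
  split_ifs with h
  exacts [max_lt hz (hz₁ h), hz]

theorem IsCompact.exists_forall_le_coe_of_lt {α : Type*} [TopologicalSpace α] {B : Set α}
    {g : α → EReal} (hB : IsCompact B) (hg : UpperSemicontinuousOn g B) {m : ℝ}
    (hlt : ∀ x ∈ B, g x < m) : ∃ t : ℝ, t < m ∧ ∀ x ∈ B, g x ≤ t := by
  rcases B.eq_empty_or_nonempty with rfl | hne
  · exact ⟨m - 1, by linarith, by simp⟩
  obtain ⟨xB, hxB, hmax⟩ := hg.exists_isMaxOn hne hB
  obtain ⟨t, hxt, htm⟩ := EReal.exists_between_coe_real (hlt xB hxB)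
  exact ⟨t, EReal.coe_lt_coe_iff.1 htm, fun x hx => (hmax hx).trans hxt.le⟩

section InnerProductSpace

variable {E : Type*} [NormedAddCommGroup E] [InnerProductSpace ℝ E]

open RealInnerProductSpace

theorem exists_affineMap_lt_of_peak {g : E → EReal} {C : Set E} (hC : IsCompact C)
    (hg : UpperSemicontinuousOn g C) {m : ℝ} (hle : ∀ x ∈ C, g x ≤ m) {x₀ w : E}
    (hpeak : ∀ x ∈ C, (m : EReal) ≤ g x → 2 * ⟪w, x - x₀⟫ + ‖x - x₀‖ ^ 2 ≤ 0)
    {δ : ℝ} (hδ : 0 < δ) :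
    ∃ a : E →ᵃ[ℝ] ℝ, a x₀ < m ∧ ∀ x ∈ sphere x₀ δ ∩ C, g x ≤ a x := by
  set B := sphere x₀ δ ∩ C ∩ {x | -(δ ^ 2 / 4) ≤ ⟪w, x - x₀⟫}
  have hB : IsCompact B :=
    (hC.inter_left isClosed_sphere).inter_right
      (isClosed_le continuous_const (continuous_const.inner (continuous_id.sub continuous_const)))
  have hgB : ∀ x ∈ B, g x < m := by
    rintro x ⟨⟨hxδ, hxC⟩, hxw : -(δ ^ 2 / 4) ≤ ⟪w, x - x₀⟫⟩
    refine lt_of_not_ge fun hmx => ?_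
    have := hpeak x hxC hmx
    rw [← dist_eq_norm, mem_sphere.1 hxδ] at this
    nlinarith
  obtain ⟨t, htm, hgt⟩ := hB.exists_forall_le_coe_of_lt (hg.mono fun x hx => hx.1.2) hgB
  have hden : 0 < δ * ‖w‖ + δ ^ 2 / 4 := by positivity
  set ε := (m - t) / (δ * ‖w‖ + δ ^ 2 / 4)
  have hε : 0 < ε := div_pos (by linarith) hden
  -- the tilt `ε * (⟪w, x - x₀⟫ + δ ^ 2 / 4)` is at most the gap `m - t` on `B`, and negative
  -- on the rest of the sphere
  let a : E →ᵃ[ℝ] ℝ :=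
    { toFun := fun x => m - ε * (⟪w, x - x₀⟫ + δ ^ 2 / 4)
      linear := -ε • innerₛₗ ℝ w
      map_vadd' := fun p v => by
        simp only [vadd_eq_add, add_sub_assoc, inner_add_right, LinearMap.smul_apply,
          innerₛₗ_apply_apply, smul_eq_mul]
        ring }
  refine ⟨a, ?_, fun x ⟨hxδ, hxC⟩ => ?_⟩
  · change m - ε * (⟪w, x₀ - x₀⟫ + δ ^ 2 / 4) < m
    rw [sub_self, inner_zero_right]
    have := mul_pos hε (pow_pos hδ 2)
    linarith
  by_cases hxw : -(δ ^ 2 / 4) ≤ ⟪w, x - x₀⟫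
  · have hinner : ⟪w, x - x₀⟫ ≤ δ * ‖w‖ := by
      rw [mul_comm, ← mem_sphere_iff_norm.1 hxδ]
      exact real_inner_le_norm w (x - x₀)
    have : ε * (⟪w, x - x₀⟫ + δ ^ 2 / 4) ≤ m - t := by
      calc ε * (⟪w, x - x₀⟫ + δ ^ 2 / 4) ≤ ε * (δ * ‖w‖ + δ ^ 2 / 4) := by gcongr
      _ = m - t := div_mul_cancel₀ _ hden.ne'
    exact (hgt x ⟨⟨hxδ, hxC⟩, hxw⟩).trans (EReal.coe_le_coe_iff.2 (by change t ≤ m - _; linarith))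
  · refine (hle x hxC).trans (EReal.coe_le_coe_iff.2 ?_)
    change m ≤ m - ε * (⟪w, x - x₀⟫ + δ ^ 2 / 4)
    nlinarith

theorem UpperSemicontinuousOn.exists_isMaxOn_affineMap_lt {g : E → EReal} {C : Set E}
    (hg : UpperSemicontinuousOn g C) (hC : IsCompact C) (htop : ∀ x ∈ C, g x ≠ ⊤) {x₁ : E}
    (hx₁ : x₁ ∈ C) (hbot : g x₁ ≠ ⊥) :
    ∃ x₀ ∈ C, IsMaxOn g C x₀ ∧
      ∀ δ > 0, ∃ a : E →ᵃ[ℝ] ℝ, (a x₀ : EReal) < g x₀ ∧ ∀ x ∈ sphere x₀ δ ∩ C, g x ≤ a x := by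
  obtain ⟨xm, hxmC, hxm⟩ := hg.exists_isMaxOn ⟨x₁, hx₁⟩ hC
  obtain ⟨m, hm⟩ : ∃ m : ℝ, g xm = m :=
    ⟨(g xm).toReal, (EReal.coe_toReal (htop xm hxmC) (ne_bot_of_le_ne_bot hbot (hxm hx₁))).symm⟩
  have hle : ∀ x ∈ C, g x ≤ m := fun x hx => hm ▸ hxm hx
  -- among the maximum points, one farthest from the origin is exposed by the inner product
  obtain ⟨x₀, ⟨hx₀C, hx₀m⟩, hx₀far⟩ :=
    (hg.isCompact_inter_preimage_Ici hC m).exists_isMaxOn ⟨xm, hxmC, hm.ge⟩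
      continuous_norm.continuousOn
  have hgx₀ : g x₀ = m := le_antisymm (hle x₀ hx₀C) hx₀m
  have hpeak : ∀ x ∈ C, (m : EReal) ≤ g x → 2 * ⟪x₀, x - x₀⟫ + ‖x - x₀‖ ^ 2 ≤ 0 := by
    intro x hxC hmx
    have hfar : ‖x‖ ≤ ‖x₀‖ := hx₀far ⟨hxC, hmx⟩
    have hexp : ‖x‖ ^ 2 = ‖x₀‖ ^ 2 + 2 * ⟪x₀, x - x₀⟫ + ‖x - x₀‖ ^ 2 := by
      rw [← norm_add_sq_real, add_sub_cancel]
    nlinarith [norm_nonneg x]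
  refine ⟨x₀, hx₀C, fun x hx => hgx₀ ▸ hle x hx, fun δ hδ => ?_⟩
  rw [hgx₀]
  exact_mod_cast exists_affineMap_lt_of_peak hC hg hle hpeak hδ

theorem le_on_closedBall_of_eventually_le_on_spheres [FiniteDimensional ℝ E] {ψ : E → EReal}
    {P : AffineSubspace ℝ E} {c : E} {r : ℝ} {l : E →ᵃ[ℝ] ℝ}
    (hψ : UpperSemicontinuousOn ψ (closedBall c r ∩ P))
    (htop : ∀ x ∈ closedBall c r ∩ P, ψ x ≠ ⊤) (hsph : ∀ x ∈ sphere c r ∩ P, ψ x ≤ l x)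
    (hloc : ∀ x₀ ∈ closedBall c r ∩ P, (l x₀ : EReal) < ψ x₀ →
      ∀ᶠ δ in 𝓝[>] 0, ∀ L : E →ᵃ[ℝ] ℝ, (∀ x ∈ sphere x₀ δ ∩ P, ψ x ≤ L x) → ψ x₀ ≤ L x₀) :
    ∀ x ∈ closedBall c r ∩ P, ψ x ≤ l x := by
  by_contra! ⟨x, hxC, hx⟩
  set C := closedBall c r ∩ (P : Set E)
  have hC : IsCompact C := (isCompact_closedBall c r).inter_right P.closed_of_finiteDimensional
  have hg : UpperSemicontinuousOn (fun x => ψ x - l x) C :=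
    hψ.add' (continuous_coe_real_ereal.comp (AffineMap.continuous_of_finiteDimensional (-l))
      |>.upperSemicontinuous.upperSemicontinuousOn C)
      fun x _ => EReal.continuousAt_add (Or.inr (EReal.coe_ne_bot _)) (Or.inr (EReal.coe_ne_top _))
  obtain ⟨x₀, hx₀C, hmax, hsep⟩ := hg.exists_isMaxOn_affineMap_lt hC
    (fun x hx => (EReal.sub_lt_of_lt_add (by simpa using (htop x hx).lt_top)).ne) hxC
    (EReal.sub_pos.2 hx).ne_bot
  have hlt : (l x₀ : EReal) < ψ x₀ := EReal.sub_pos.1 ((EReal.sub_pos.2 hx).trans_le (hmax hxC))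
  have hx₀ball : x₀ ∈ ball c r :=
    (mem_closedBall.1 hx₀C.1).lt_of_ne fun h => (hsph x₀ ⟨h, hx₀C.2⟩).not_gt hlt
  obtain ⟨δ, hδ, hδball, hδloc⟩ := (eventually_mem_nhdsWithin.and
    (((eventually_closedBall_subset (isOpen_ball.mem_nhds hx₀ball)).filter_mono
      nhdsWithin_le_nhds).and (hloc x₀ hx₀C hlt))).exists
  obtain ⟨a, ha, hga⟩ := hsep δ hδ
  have hle : ψ x₀ ≤ (a + l) x₀ := hδloc (a + l) fun x hx => by
    have hxC : x ∈ C := ⟨ball_subset_closedBall (hδball (sphere_subset_closedBall hx.1)), hx.2⟩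
    rw [AffineMap.coe_add, Pi.add_apply, EReal.coe_add]
    exact (EReal.sub_le_iff_le_add (.inl (EReal.coe_ne_bot _)) (.inl (EReal.coe_ne_top _))).1
      (hga x ⟨hx.1, hxC⟩)
  rw [AffineMap.coe_add, Pi.add_apply, EReal.coe_add] at hle
  exact hle.not_gt ((EReal.lt_sub_iff_add_lt (.inl (EReal.coe_ne_bot _))
    (.inl (EReal.coe_ne_top _))).1 ha)

end InnerProductSpace

open Classical in
theorem realQConvexOn_glue_general {n q : ℕ}
    (ω ω₁ : Set (EuclideanSpace ℝ (Fin n))) (hω₁ : IsOpen ω₁)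
    (u u₁ : EuclideanSpace ℝ (Fin n) → EReal)
    (hu : RealQConvexOn q u ω) (hu₁ : RealQConvexOn q u₁ ω₁)
    (hlim : ∀ x ∈ frontier ω₁ ∩ ω, Filter.limsup u₁ (nhdsWithin x ω₁) ≤ u x) :
    RealQConvexOn q (fun x => if x ∈ ω₁ then max (u x) (u₁ x) else u x) ω := by
  set ψ := fun x => if x ∈ ω₁ then max (u x) (u₁ x) else u x
  have hψ_usc : UpperSemicontinuousOn ψ ω := upperSemicontinuousOn_ite_max hu.2.1 hu₁.2.1 hlim
  have hψ_top : ∀ x ∈ ω, ψ x ≠ ⊤ := fun x hx => by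
    by_cases h : x ∈ ω₁
    · simpa [ψ, h] using ⟨hu.1 x hx, hu₁.1 x h⟩
    · simpa [ψ, h] using hu.1 x hx
  have hu_le : ∀ x, u x ≤ ψ x := fun x => by
    by_cases h : x ∈ ω₁ <;> simp [ψ, h]
  refine ⟨hψ_top, hψ_usc, fun P hP c r hr hcl l hsph => ?_⟩
  have hul : ∀ x ∈ closedBall c r ∩ P, u x ≤ l x :=
    hu.2.2 P hP c r hr hcl l fun x hx => (hu_le x).trans (hsph x hx)
  rw [closure_ball c hr.ne'] at hcl
  refine le_on_closedBall_of_eventually_le_on_spheres (hψ_usc.mono fun x hx => hcl hx.1)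
    (fun x hx => hψ_top x (hcl hx.1)) hsph fun x₀ hx₀ hlt => ?_
  have hx₀ω₁ : x₀ ∈ ω₁ := by
    by_contra h
    exact (hul x₀ hx₀).not_gt (by simpa [ψ, h] using hlt)
  have hψx₀ : ψ x₀ = u₁ x₀ := by
    have hu₁x₀ : u x₀ < u₁ x₀ := by simpa [ψ, hx₀ω₁] using (hul x₀ hx₀).trans_lt hlt
    simp [ψ, hx₀ω₁, hu₁x₀.le]
  filter_upwards [eventually_mem_nhdsWithin,
    (eventually_closedBall_subset (hω₁.mem_nhds hx₀ω₁)).filter_mono nhdsWithin_le_nhds]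
    with δ hδ hδω₁ L hL
  rw [hψx₀]
  refine hu₁.2.2 P hP x₀ δ hδ (by rwa [closure_ball x₀ (ne_of_gt hδ)]) L (fun x hx => ?_) x₀
    ⟨mem_closedBall_self (le_of_lt hδ), hx₀.2⟩
  have hxω₁ : x ∈ ω₁ := hδω₁ (sphere_subset_closedBall hx.1)
  exact (by simp [ψ, hxω₁] : u₁ x ≤ ψ x).trans (hL x hx)

open Classical in
/-- Gluing theorem: if `u` is real q-convex on `ω`, `u₁` is real q-convex on `ω₁ ⊆ ω`,
and `limsup_{y→x, y∈ω₁} u₁(y) ≤ u(x)` for every `x ∈ ∂ω₁ ∩ ω`, then the function equal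
to `max{u, u₁}` on `ω₁` and to `u` on `ω ∖ ω₁` is real q-convex on `ω`. -/
theorem realQConvexOn_glue {n q : ℕ}
    (ω ω₁ : Set (EuclideanSpace ℝ (Fin n))) (hω : IsOpen ω) (hω₁ : IsOpen ω₁)
    (hsub : ω₁ ⊆ ω)
    (u u₁ : EuclideanSpace ℝ (Fin n) → EReal)
    (hu : RealQConvexOn q u ω) (hu₁ : RealQConvexOn q u₁ ω₁)
    (hlim : ∀ x ∈ frontier ω₁ ∩ ω, Filter.limsup u₁ (nhdsWithin x ω₁) ≤ u x) :
    RealQConvexOn q (fun x => if x ∈ ω₁ then max (u x) (u₁ x) else u x) ω :=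
  realQConvexOn_glue_general ω ω₁ hω₁ u u₁ hu hu₁ hlim
end
end

section
/- Let q ∈ {0,…,n−1} and let {π_α}_{α∈A} be a collection of real (n−q)-dimensional affine subspaces of ℝⁿ whose union covers ℝⁿ. Let u be a continuous real-valued function on an open set ω ⊆ ℝⁿ such that for each α ∈ A the restriction of u to π_α ∩ ω is locally convex (i.e., every point of π_α ∩ ω has a convex relatively open neighborhood in π_α ∩ ω on which u is convex). Then u is real q-convex on ω. -/
/-! Subtract `l` and, among the maximum points of `u - l` on the compact slice
`closedBall c r ∩ P`, take one farthest from the origin. If it lay inside the ball, the dimension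
count `(q + 1) + (n - q) > n` would give a line through it in `P ∩ π α`, along which `u - l` is
convex near the point; its two symmetric neighbours on that line would then be maximum points
as well, and one of them is farther from the origin since the norm is strictly convex. So the
maximum is attained on the sphere, where `u ≤ l`. -/

open Metric Set Filter

noncomputable section

open Topology Module

theorem Submodule.exists_mem_inf_ne_zero_of_finrank_lt_add {K V : Type*} [DivisionRing K]
    [AddCommGroup V] [Module K V] [FiniteDimensional K V] {s t : Submodule K V}
    (h : finrank K V < finrank K s + finrank K t) : ∃ v ∈ s ⊓ t, v ≠ 0 :=
  Submodule.exists_mem_ne_zero_of_ne_bot fun hbot =>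
    h.not_ge (Submodule.finrank_add_finrank_le_of_disjoint (disjoint_iff.mpr hbot))

theorem AffineMap.map_add_add_map_sub {k V₁ V₂ : Type*} [Ring k] [AddCommGroup V₁]
    [Module k V₁] [AddCommGroup V₂] [Module k V₂] (f : V₁ →ᵃ[k] V₂) (x v : V₁) :
    f (x + v) + f (x - v) = 2 • f x := by
  have h (w : V₁) : f (x + w) = f.linear w + f x := by rw [add_comm]; exact f.map_vadd x w
  rw [sub_eq_add_neg, h, h, map_neg]
  abel

theorem ConvexOn.two_mul_le_add_of_add_mem_of_sub_mem {E : Type*} [AddCommGroup E]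
    [Module ℝ E] {s : Set E} {f : E → ℝ} (hf : ConvexOn ℝ s f) {x v : E} (h₁ : x + v ∈ s)
    (h₂ : x - v ∈ s) :
    2 * f x ≤ f (x + v) + f (x - v) := by
  have := hf.2 h₁ h₂ (one_half_pos (α := ℝ)).le one_half_pos.le (add_halves 1)
  rw [show (1 / 2 : ℝ) • (x + v) + (1 / 2 : ℝ) • (x - v) = x by module, smul_eq_mul,
    smul_eq_mul] at this
  linarith

theorem AffineSubspace.add_mem_of_mem_direction {k V : Type*} [Ring k] [AddCommGroup V]
    [Module k V] {s : AffineSubspace k V} {x v : V} (hx : x ∈ s) (hv : v ∈ s.direction) :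
    x + v ∈ s := by
  simpa [add_comm] using s.vadd_mem_of_mem_direction hv hx

theorem AffineSubspace.sub_mem_of_mem_direction {k V : Type*} [Ring k] [AddCommGroup V]
    [Module k V] {s : AffineSubspace k V} {x v : V} (hx : x ∈ s) (hv : v ∈ s.direction) :
    x - v ∈ s := by
  simpa [sub_eq_add_neg] using s.add_mem_of_mem_direction hx (s.direction.neg_mem hv)

theorem IsOpen.exists_pos_add_smul_mem_sub_smul_mem {E : Type*} [AddCommGroup E]
    [Module ℝ E] [TopologicalSpace E] [IsTopologicalAddGroup E] [ContinuousSMul ℝ E] {W : Set E}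
    (hW : IsOpen W) {y : E} (hy : y ∈ W) (v : E) :
    ∃ t : ℝ, 0 < t ∧ y + t • v ∈ W ∧ y - t • v ∈ W := by
  have hcont (w : E) : Tendsto (fun t : ℝ => y + t • w) (𝓝 0) (𝓝 y) :=
    (show Continuous fun t : ℝ => y + t • w by fun_prop).tendsto' 0 y (by simp)
  have hev : ∀ᶠ t in 𝓝[>] (0 : ℝ), y + t • v ∈ W ∧ y + t • -v ∈ W :=
    ((hcont v).eventually (hW.mem_nhds hy)).and ((hcont (-v)).eventually (hW.mem_nhds hy))
      |>.filter_mono nhdsWithin_le_nhds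
  obtain ⟨t, ⟨h₁, h₂⟩, ht⟩ := (hev.and self_mem_nhdsWithin).exists
  exact ⟨t, ht, h₁, by simpa [sub_eq_add_neg] using h₂⟩

theorem AffineSubspace.exists_ne_zero_add_mem_sub_mem_of_finrank_lt_add {E : Type*}
    [AddCommGroup E] [Module ℝ E] [TopologicalSpace E] [IsTopologicalAddGroup E]
    [ContinuousSMul ℝ E] [FiniteDimensional ℝ E] {P Q : AffineSubspace ℝ E}
    (hdim : finrank ℝ E < finrank ℝ P.direction + finrank ℝ Q.direction) {W : Set E}
    (hW : IsOpen W) {y : E} (hyW : y ∈ W) (hyP : y ∈ P) (hyQ : y ∈ Q) :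
    ∃ v ≠ 0, y + v ∈ W ∩ P ∩ Q ∧ y - v ∈ W ∩ P ∩ Q := by
  obtain ⟨v, ⟨hvP, hvQ⟩, hv⟩ := Submodule.exists_mem_inf_ne_zero_of_finrank_lt_add hdim
  obtain ⟨t, ht, hp, hm⟩ := hW.exists_pos_add_smul_mem_sub_smul_mem hyW v
  refine ⟨t • v, smul_ne_zero ht.ne' hv, ⟨⟨hp, ?_⟩, ?_⟩, ⟨⟨hm, ?_⟩, ?_⟩⟩
  · exact P.add_mem_of_mem_direction hyP (P.direction.smul_mem t hvP)
  · exact Q.add_mem_of_mem_direction hyQ (Q.direction.smul_mem t hvQ)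
  · exact P.sub_mem_of_mem_direction hyP (P.direction.smul_mem t hvP)
  · exact Q.sub_mem_of_mem_direction hyQ (Q.direction.smul_mem t hvQ)

theorem IsCompact.exists_isMaxOn_mem_of_two_mul_le_add {E : Type*} [NormedAddCommGroup E]
    [NormedSpace ℝ E] [StrictConvexSpace ℝ E] {K S : Set E} {g : E → ℝ} (hK : IsCompact K)
    (hne : K.Nonempty) (hg : ContinuousOn g K)
    (hmid : ∀ y ∈ K \ S, ∃ v ≠ 0, y + v ∈ K ∧ y - v ∈ K ∧ 2 * g y ≤ g (y + v) + g (y - v)) :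
    ∃ y ∈ K ∩ S, IsMaxOn g K y := by
  obtain ⟨y₀, hy₀, hmax₀⟩ := hK.exists_isMaxOn hne hg
  have hM : IsCompact (K ∩ g ⁻¹' {g y₀}) :=
    hK.of_isClosed_subset (hg.preimage_isClosed_of_isClosed hK.isClosed isClosed_singleton)
      inter_subset_left
  obtain ⟨y, ⟨hyK, hy : g y = g y₀⟩, hfar⟩ :=
    hM.exists_isMaxOn ⟨y₀, hy₀, rfl⟩ continuous_norm.continuousOn
  have hymax : IsMaxOn g K y := fun z hz => (hmax₀ hz).trans_eq hy.symm
  refine ⟨y, ⟨hyK, ?_⟩, hymax⟩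
  by_contra hyS
  obtain ⟨v, hv, h₁, h₂, hle⟩ := hmid y ⟨hyK, hyS⟩
  have hg₁ : g (y + v) ≤ g y := hymax h₁
  have hg₂ : g (y - v) ≤ g y := hymax h₂
  have hn₁ : ‖y + v‖ ≤ ‖y‖ := hfar ⟨h₁, show g (y + v) = g y₀ by linarith⟩
  have hn₂ : ‖y - v‖ ≤ ‖y‖ := hfar ⟨h₂, show g (y - v) = g y₀ by linarith⟩
  -- `y` is the midpoint of two distinct points of the closed ball of radius `‖y‖`.
  have hne : y + v ≠ y - v := sub_ne_zero.mp <| by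
    rw [show y + v - (y - v) = (2 : ℝ) • v by module]; exact smul_ne_zero two_ne_zero hv
  have := norm_combo_lt_of_ne hn₁ hn₂ hne one_half_pos one_half_pos (add_halves 1)
  rw [← smul_add, add_add_sub_cancel, ← two_smul ℝ y, smul_smul] at this
  norm_num at this

theorem realQConvexOn_of_locallyConvex_on_foliation_general {n q : ℕ}
    {A : Type*} (π : A → AffineSubspace ℝ (EuclideanSpace ℝ (Fin n)))
    (hdim : ∀ α, Module.finrank ℝ (π α).direction = n - q)
    (hcover : (⋃ α, (π α : Set (EuclideanSpace ℝ (Fin n)))) = Set.univ)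
    (ω : Set (EuclideanSpace ℝ (Fin n)))
    (u : EuclideanSpace ℝ (Fin n) → ℝ) (hu : ContinuousOn u ω)
    (hloc : ∀ α, ∀ x ∈ (π α : Set (EuclideanSpace ℝ (Fin n))) ∩ ω,
      ∃ U, IsOpen U ∧ x ∈ U ∧
        Convex ℝ (U ∩ (π α : Set (EuclideanSpace ℝ (Fin n))) ∩ ω) ∧
        ConvexOn ℝ (U ∩ (π α : Set (EuclideanSpace ℝ (Fin n))) ∩ ω) u) :
    RealQConvexOn q (fun x => (u x : EReal)) ω := by
  refine ⟨fun x _ => EReal.coe_ne_top _, continuous_coe_real_ereal.comp_upperSemicontinuousOn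
    hu.upperSemicontinuousOn fun _ _ => EReal.coe_le_coe_iff.mpr, ?_⟩
  intro P hP c r hr hsub l hl x hx
  have hball : closedBall c r ⊆ ω := closure_ball c hr.ne' ▸ hsub
  have hK : IsCompact (closedBall c r ∩ P) :=
    (isCompact_closedBall c r).inter_right P.closed_of_finiteDimensional
  suffices ∃ y ∈ closedBall c r ∩ P ∩ sphere c r,
      IsMaxOn (fun z => u z - l z) (closedBall c r ∩ P) y by
    obtain ⟨y, ⟨hyK, hyS⟩, hymax⟩ := this
    have hly := EReal.coe_le_coe_iff.mp (hl y ⟨hyS, hyK.2⟩)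
    have hxy : u x - l x ≤ u y - l y := hymax hx
    exact EReal.coe_le_coe_iff.mpr (by linarith)
  have hg : ContinuousOn (fun z => u z - l z) (closedBall c r ∩ P) :=
    (hu.mono (inter_subset_left.trans hball)).sub l.continuous_of_finiteDimensional.continuousOn
  refine hK.exists_isMaxOn_mem_of_two_mul_le_add ⟨x, hx⟩ hg ?_
  rintro y ⟨⟨hyB, hyP⟩, hyS⟩
  have hyB : y ∈ ball c r := mem_ball.2 ((mem_closedBall.1 hyB).lt_of_ne hyS)
  obtain ⟨α, hyα⟩ := mem_iUnion.1 (hcover ▸ mem_univ y)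
  obtain ⟨U, hU, hyU, -, hconv⟩ := hloc α y ⟨hyα, hball (ball_subset_closedBall hyB)⟩
  obtain ⟨v, hv, ⟨⟨⟨hpU, hpB⟩, hpP⟩, hpα⟩, ⟨⟨⟨hmU, hmB⟩, hmP⟩, hmα⟩⟩ :=
    AffineSubspace.exists_ne_zero_add_mem_sub_mem_of_finrank_lt_add (P := P) (Q := π α)
      (by rw [finrank_euclideanSpace_fin, hP, hdim α]; omega) (hU.inter isOpen_ball) ⟨hyU, hyB⟩
      hyP hyα
  refine ⟨v, hv, ⟨ball_subset_closedBall hpB, hpP⟩, ⟨ball_subset_closedBall hmB, hmP⟩, ?_⟩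
  have hu_mid := hconv.two_mul_le_add_of_add_mem_of_sub_mem
    ⟨⟨hpU, hpα⟩, hball (ball_subset_closedBall hpB)⟩
    ⟨⟨hmU, hmα⟩, hball (ball_subset_closedBall hmB)⟩
  have hl_mid := l.map_add_add_map_sub y v
  rw [nsmul_eq_mul, Nat.cast_ofNat] at hl_mid
  linarith

/-- If `{π_α}` is a family of real `(n-q)`-dimensional affine subspaces covering `ℝⁿ` and
`u` is continuous on `ω` and locally convex on each slice `π_α ∩ ω`, then `u` is real
q-convex on `ω`. -/
theorem realQConvexOn_of_locallyConvex_on_foliation {n q : ℕ} (hq : q < n)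
    {A : Type*} (π : A → AffineSubspace ℝ (EuclideanSpace ℝ (Fin n)))
    (hdim : ∀ α, Module.finrank ℝ (π α).direction = n - q)
    (hcover : (⋃ α, (π α : Set (EuclideanSpace ℝ (Fin n)))) = Set.univ)
    (ω : Set (EuclideanSpace ℝ (Fin n))) (hω : IsOpen ω)
    (u : EuclideanSpace ℝ (Fin n) → ℝ) (hu : ContinuousOn u ω)
    (hloc : ∀ α, ∀ x ∈ (π α : Set (EuclideanSpace ℝ (Fin n))) ∩ ω,
      ∃ U, IsOpen U ∧ x ∈ U ∧
        Convex ℝ (U ∩ (π α : Set (EuclideanSpace ℝ (Fin n))) ∩ ω) ∧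
        ConvexOn ℝ (U ∩ (π α : Set (EuclideanSpace ℝ (Fin n))) ∩ ω) u) :
    RealQConvexOn q (fun x => (u x : EReal)) ω :=
  realQConvexOn_of_locallyConvex_on_foliation_general π hdim hcover ω u hu hloc
end
end

section
/- Let q ∈ {0,…,n−1}, let ω be an open set in ℝⁿ, and let u : ω → [−∞,+∞) be upper semicontinuous but NOT real q-convex on ω. Then there exist an open Euclidean ball B with closure contained in ω, a point x₁ ∈ B, a number ε > 0, and a C^∞-smooth real (n−q−1)-convex function v on ℝⁿ such that (u+v)(x₁) = 0 and (u+v)(x) < −ε‖x − x₁‖₂² for every x ∈ B∖{x₁}. -/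
open Metric Set Filter

noncomputable section

set_option maxHeartbeats 2000000

local notation "⟪" x ", " y "⟫" => @inner ℝ _ _ x y

theorem usc_exists_max_aux {X : Type*} [TopologicalSpace X] {f : X → EReal} {K : Set X}
    (hK : IsCompact K) (hne : K.Nonempty) (hf : UpperSemicontinuousOn f K) :
    ∃ x ∈ K, ∀ y ∈ K, f y ≤ f x := by
  by_contra h
  push_neg at h
  choose! g hg1 hg2 using h
  have hU : ∀ x (hx : x ∈ K), {z | z ∈ K → f z < f (g x)} ∈ nhds x := by
    intro x hx
    have := hf x hx (f (g x)) (hg2 x hx)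
    rwa [eventually_nhdsWithin_iff] at this
  obtain ⟨t, ht⟩ := hK.elim_nhds_subcover' _ hU
  obtain ⟨x₀, hx₀⟩ := hne
  obtain ⟨i, hit, hmem⟩ := Set.mem_iUnion₂.mp (ht hx₀)
  obtain ⟨i₀, hi₀t, hmax⟩ := t.exists_max_image (fun i => f (g i)) ⟨i, hit⟩
  have hgK : g (i₀ : X) ∈ K := hg1 _ i₀.2
  obtain ⟨j, hjt, hj⟩ := Set.mem_iUnion₂.mp (ht hgK)
  exact absurd ((hj hgK).trans_le (hmax j hjt)) (lt_irrefl _)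

theorem norm_add_smul_sq_aux {E : Type*} [NormedAddCommGroup E] [InnerProductSpace ℝ E]
    (x y : E) (t : ℝ) :
    ‖x + t • y‖ ^ 2 = ‖x‖ ^ 2 + 2 * t * ⟪x, y⟫ + t ^ 2 * ‖y‖ ^ 2 := by
  rw [@norm_add_sq_real, real_inner_smul_right, norm_smul]
  simp [mul_pow, sq_abs]
  ring

theorem quad_max_principle_aux {n s : ℕ} (W : Submodule ℝ (EuclideanSpace ℝ (Fin n)))
    (hdim : n ≤ Module.finrank ℝ W + s) (v : EuclideanSpace ℝ (Fin n) → ℝ)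
    (hquad : ∀ e ∈ W, ∀ x : EuclideanSpace ℝ (Fin n), ∃ A B : ℝ, 0 ≤ A ∧
      ∀ t : ℝ, v (x + t • e) = A * t ^ 2 + B * t + v x)
    (Q : AffineSubspace ℝ (EuclideanSpace ℝ (Fin n)))
    (hQ : Module.finrank ℝ Q.direction = s + 1)
    (c : EuclideanSpace ℝ (Fin n)) (r : ℝ) (hr : 0 < r)
    (l : EuclideanSpace ℝ (Fin n) →ᵃ[ℝ] ℝ)
    (hsph : ∀ x ∈ Metric.sphere c r ∩ (Q : Set (EuclideanSpace ℝ (Fin n))), v x ≤ l x)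
    (x : EuclideanSpace ℝ (Fin n))
    (hx : x ∈ Metric.closedBall c r ∩ (Q : Set (EuclideanSpace ℝ (Fin n)))) :
    v x ≤ l x := by
  obtain ⟨hxb, hxQ⟩ := hx
  have hfE : Module.finrank ℝ (EuclideanSpace ℝ (Fin n)) = n := by
    simp [finrank_euclideanSpace]
  have hsup : Module.finrank ℝ (Q.direction ⊔ W : Submodule ℝ _) ≤ n := by
    have := Submodule.finrank_le (Q.direction ⊔ W)
    omega
  have hinf : 0 < Module.finrank ℝ (Q.direction ⊓ W : Submodule ℝ _) := by
    have := Submodule.finrank_sup_add_finrank_inf_eq Q.direction W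
    omega
  have hbot : (Q.direction ⊓ W : Submodule ℝ _) ≠ ⊥ := by
    intro hb
    rw [hb, finrank_bot] at hinf
    exact lt_irrefl _ hinf
  obtain ⟨e₀, he₀, he₀ne⟩ := Submodule.exists_mem_ne_zero_of_ne_bot hbot
  set e : EuclideanSpace ℝ (Fin n) := ‖e₀‖⁻¹ • e₀ with he_def
  have hee : ‖e‖ = 1 := norm_smul_inv_norm he₀ne
  have heQ : e ∈ Q.direction := Submodule.smul_mem _ _ (Submodule.mem_inf.mp he₀).1
  have heW : e ∈ W := Submodule.smul_mem _ _ (Submodule.mem_inf.mp he₀).2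
  obtain ⟨A, B, hA, hform⟩ := hquad e heW x
  set b : ℝ := ⟪x - c, e⟫ with hb_def
  set s0 : ℝ := r ^ 2 - ‖x - c‖ ^ 2 with hs0_def
  have hs0 : 0 ≤ s0 := by
    have : ‖x - c‖ ≤ r := by rwa [Metric.mem_closedBall, dist_eq_norm] at hxb
    nlinarith [norm_nonneg (x - c)]
  set D : ℝ := Real.sqrt (b ^ 2 + s0) with hD_def
  have hD2 : D ^ 2 = b ^ 2 + s0 := Real.sq_sqrt (by positivity)
  have hDb : |b| ≤ D := by
    rw [← Real.sqrt_sq_eq_abs]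
    exact Real.sqrt_le_sqrt (by linarith)
  have habs := abs_le.mp hDb
  have hsphere : ∀ t : ℝ, t ^ 2 + 2 * b * t = s0 → x + t • e ∈ Metric.sphere c r := by
    intro t hteq
    have harg : x + t • e - c = (x - c) + t • e := by abel
    have hn2 : ‖x + t • e - c‖ ^ 2 = r ^ 2 := by
      rw [harg, norm_add_smul_sq_aux, hee]
      simp only [one_pow, mul_one, ← hb_def]
      nlinarith
    rw [Metric.mem_sphere, dist_eq_norm, ← Real.sqrt_sq (norm_nonneg _), hn2,
      Real.sqrt_sq hr.le]
  have hmemQ : ∀ t : ℝ, x + t • e ∈ Q := by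
    intro t
    have : (t • e) +ᵥ x ∈ Q :=
      AffineSubspace.vadd_mem_of_mem_direction (Submodule.smul_mem _ _ heQ) hxQ
    simpa [vadd_eq_add, add_comm] using this
  have ht1eq : (-b - D) ^ 2 + 2 * b * (-b - D) = s0 := by nlinarith
  have ht2eq : (-b + D) ^ 2 + 2 * b * (-b + D) = s0 := by nlinarith
  have hy1 := hsph _ ⟨hsphere _ ht1eq, hmemQ (-b - D)⟩
  have hy2 := hsph _ ⟨hsphere _ ht2eq, hmemQ (-b + D)⟩
  have hl : ∀ t : ℝ, l (x + t • e) = t * l.linear e + l x := by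
    intro t
    have : l ((t • e) +ᵥ x) = l.linear (t • e) +ᵥ l x := l.map_vadd x (t • e)
    simpa [vadd_eq_add, add_comm, map_smul, smul_eq_mul] using this
  rw [hform, hl] at hy1 hy2
  set B' : ℝ := B - l.linear e with hB'_def
  have ht1 : -b - D ≤ 0 := by linarith
  have ht2 : 0 ≤ -b + D := by linarith
  rcases le_total 0 B' with hB | hB
  · nlinarith [mul_nonneg hA (sq_nonneg (-b + D)), mul_nonneg hB ht2]
  · nlinarith [mul_nonneg hA (sq_nonneg (-b - D)),
      mul_nonneg (neg_nonneg.mpr hB) (neg_nonneg.mpr ht1)]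

theorem main_aux {n q : ℕ} (hq : q < n)
    (ω : Set (EuclideanSpace ℝ (Fin n))) (hω : IsOpen ω)
    (u : EuclideanSpace ℝ (Fin n) → EReal)
    (husc : UpperSemicontinuousOn u ω) (htop : ∀ x ∈ ω, u x ≠ ⊤)
    (hnot : ¬ ∀ P : AffineSubspace ℝ (EuclideanSpace ℝ (Fin n)),
      Module.finrank ℝ P.direction = q + 1 →
      ∀ (c : EuclideanSpace ℝ (Fin n)) (r : ℝ), 0 < r → closure (Metric.ball c r) ⊆ ω →
        ∀ l : EuclideanSpace ℝ (Fin n) →ᵃ[ℝ] ℝ,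
          (∀ x ∈ Metric.sphere c r ∩ (P : Set (EuclideanSpace ℝ (Fin n))), u x ≤ (l x : EReal)) →
          ∀ x ∈ Metric.closedBall c r ∩ (P : Set (EuclideanSpace ℝ (Fin n))),
            u x ≤ (l x : EReal)) :
    ∃ (c x₁ : EuclideanSpace ℝ (Fin n)) (r ε : ℝ), 0 < r ∧ 0 < ε ∧
      closure (Metric.ball c r) ⊆ ω ∧ x₁ ∈ Metric.ball c r ∧
      ∃ v : EuclideanSpace ℝ (Fin n) → ℝ, ContDiff ℝ (⊤ : ℕ∞) v ∧
        (∀ P : AffineSubspace ℝ (EuclideanSpace ℝ (Fin n)),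
            Module.finrank ℝ P.direction = (n - q - 1) + 1 →
            ∀ (c' : EuclideanSpace ℝ (Fin n)) (r' : ℝ), 0 < r' →
              ∀ l : EuclideanSpace ℝ (Fin n) →ᵃ[ℝ] ℝ,
                (∀ x ∈ Metric.sphere c' r' ∩ (P : Set (EuclideanSpace ℝ (Fin n))),
                  v x ≤ l x) →
                ∀ x ∈ Metric.closedBall c' r' ∩ (P : Set (EuclideanSpace ℝ (Fin n))),
                  v x ≤ l x) ∧
        u x₁ + (v x₁ : EReal) = 0 ∧
        ∀ x ∈ Metric.ball c r \ {x₁},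
          u x + (v x : EReal) < ((-ε * ‖x - x₁‖ ^ 2 : ℝ) : EReal) := by
  classical
  push_neg at hnot
  obtain ⟨P, hP, c, r, hr, hsub, l, hsphl, x₀, hx₀mem, hx₀gt⟩ := hnot
  obtain ⟨hx₀cB, hx₀P⟩ := hx₀mem
  have hclos : closure (ball c r) = closedBall c r := closure_ball c hr.ne'
  have hcB : closedBall c r ⊆ ω := by rw [← hclos]; exact hsub
  have hSsub : sphere c r ⊆ ω := fun y hy => hcB (sphere_subset_closedBall hy)
  have hx₀ω : x₀ ∈ ω := hcB hx₀cB
  have hx₀top : u x₀ ≠ ⊤ := htop _ hx₀ω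
  have hx₀bot : u x₀ ≠ ⊥ := by
    intro hb
    rw [hb] at hx₀gt
    exact absurd hx₀gt (by simp)
  obtain ⟨ρ, hρ⟩ : ∃ ρ : ℝ, u x₀ = (ρ : EReal) :=
    ⟨(u x₀).toReal, (EReal.coe_toReal hx₀top hx₀bot).symm⟩
  have hηpos : 0 < ρ - l x₀ := by
    rw [hρ] at hx₀gt
    have := EReal.coe_lt_coe_iff.mp hx₀gt
    linarith
  obtain ⟨η, hη, hηdef⟩ : ∃ η : ℝ, 0 < η ∧ η = ρ - l x₀ := ⟨_, hηpos, rfl⟩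
  obtain ⟨δ, hδ, hδr⟩ : ∃ δ : ℝ, 0 < δ ∧ δ * r ^ 2 ≤ η / 4 := by
    refine ⟨η / (4 * (r ^ 2 + 1)), div_pos hη (by positivity), ?_⟩
    have hne : (4 : ℝ) * (r ^ 2 + 1) > 0 := by positivity
    rw [div_mul_eq_mul_div, div_le_div_iff₀ hne (by norm_num)]
    nlinarith
  obtain ⟨ε, hε, hεδ⟩ : ∃ ε : ℝ, 0 < ε ∧ 2 * ε ≤ δ := ⟨δ / 4, by linarith, by linarith⟩
  set W := P.direction with hW_def
  obtain ⟨PE, hPEW, hPEe, hPEn⟩ :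
      ∃ PE : EuclideanSpace ℝ (Fin n) →L[ℝ] EuclideanSpace ℝ (Fin n),
        (∀ z, PE z ∈ W) ∧ (∀ e ∈ W, PE e = e) ∧ (∀ z, ‖PE z‖ ≤ ‖z‖) := by
    refine ⟨W.subtypeL.comp (Submodule.orthogonalProjection W), fun z => SetLike.coe_mem _,
      fun e he => (Submodule.starProjection_eq_self_iff (K := W)).mpr he, fun z => ?_⟩
    have h2 := (Submodule.orthogonalProjection W).le_opNorm z
    have h3 := Submodule.orthogonalProjection_norm_le W
    calc ‖(W.subtypeL.comp (Submodule.orthogonalProjection W)) z‖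
        = ‖Submodule.orthogonalProjection W z‖ := rfl
    _ ≤ ‖Submodule.orthogonalProjection W‖ * ‖z‖ := h2
    _ ≤ 1 * ‖z‖ := mul_le_mul_of_nonneg_right h3 (norm_nonneg z)
    _ = ‖z‖ := one_mul _
  obtain ⟨w, hwx₀⟩ : ∃ w : EuclideanSpace ℝ (Fin n), x₀ - c - PE (x₀ - c) - w = 0 :=
    ⟨_, sub_self _⟩
  -- the open set U around sphere ∩ P where u < l + η/4
  have hlc : Continuous l := l.continuous_of_finiteDimensional
  obtain ⟨U, hUo, hUsp, hUp⟩ : ∃ U : Set (EuclideanSpace ℝ (Fin n)), IsOpen U ∧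
      sphere c r ∩ (P : Set (EuclideanSpace ℝ (Fin n))) ⊆ U ∧
      ∀ z ∈ U, u z < ((l z + η / 4 : ℝ) : EReal) := by
    have key : ∀ y ∈ sphere c r ∩ (P : Set (EuclideanSpace ℝ (Fin n))),
        ∃ V : Set (EuclideanSpace ℝ (Fin n)), IsOpen V ∧ y ∈ V ∧
          ∀ z ∈ V, u z < ((l z + η / 4 : ℝ) : EReal) := by
      intro y hy
      have hyω : y ∈ ω := hSsub hy.1
      have h1 : u y < ((l y + η / 8 : ℝ) : EReal) :=
        lt_of_le_of_lt (hsphl y hy) (EReal.coe_lt_coe_iff.mpr (by linarith))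
      have h2 := husc y hyω _ h1
      rw [nhdsWithin_eq_nhds.mpr (hω.mem_nhds hyω)] at h2
      have h3 : ∀ᶠ z in nhds y, l y - η / 8 < l z :=
        (hlc.tendsto y).eventually_const_lt (by linarith)
      obtain ⟨V, hVsub, hVo, hVy⟩ := _root_.eventually_nhds_iff.mp (h2.and h3)
      refine ⟨V, hVo, hVy, fun z hz => ?_⟩
      obtain ⟨hz1, hz2⟩ := hVsub z hz
      exact lt_of_lt_of_le hz1 (EReal.coe_le_coe_iff.mpr (by linarith))
    choose V hVo hVy hVp using key
    refine ⟨⋃ (y) (hy : y ∈ sphere c r ∩ (P : Set (EuclideanSpace ℝ (Fin n)))), V y hy,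
      isOpen_iUnion fun y => isOpen_iUnion fun hy => hVo y hy,
      fun y hy => Set.mem_iUnion₂.mpr ⟨y, hy, hVy y hy⟩, ?_⟩
    intro z hz
    obtain ⟨y, hy, hzV⟩ := Set.mem_iUnion₂.mp hz
    exact hVp y hy z hzV
  -- bound M for u on the sphere
  haveI : Nonempty (Fin n) := ⟨⟨0, lt_of_le_of_lt (Nat.zero_le q) hq⟩⟩
  have hSne : (sphere c r).Nonempty := NormedSpace.sphere_nonempty.mpr hr.le
  obtain ⟨M, hM0, hMb⟩ : ∃ M : ℝ, 0 ≤ M ∧ ∀ y ∈ sphere c r, u y ≤ (M : EReal) := by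
    obtain ⟨yM, hyM, hyMmax⟩ :=
      usc_exists_max_aux (isCompact_sphere c r) hSne (husc.mono hSsub)
    refine ⟨max (u yM).toReal 0, le_max_right _ _, fun y hy => ?_⟩
    refine (hyMmax y hy).trans ?_
    calc u yM ≤ ((u yM).toReal : EReal) := EReal.le_coe_toReal (htop _ (hSsub hyM))
    _ ≤ ((max (u yM).toReal 0 : ℝ) : EReal) := EReal.coe_le_coe_iff.mpr (le_max_left _ _)
  -- bound L for -l on the sphere
  obtain ⟨L, hL0, hLb⟩ : ∃ L : ℝ, 0 ≤ L ∧ ∀ y ∈ sphere c r, -(l y) ≤ L := by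
    obtain ⟨yL, hyL, hyLmax⟩ :=
      (isCompact_sphere c r).exists_isMaxOn hSne (hlc.neg.continuousOn)
    exact ⟨max (-(l yL)) 0, le_max_right _ _,
      fun y hy => (hyLmax hy).trans (le_max_left _ _)⟩
  -- choice of K
  obtain ⟨K, hK0, hKb⟩ : ∃ K : ℝ, 0 ≤ K ∧ ∀ y ∈ sphere c r, y ∉ U →
      -(l y) - K * ‖(y - c) - PE (y - c) - w‖ ^ 2 ≤ -M - 1 := by
    by_cases hT : ∃ y, y ∈ sphere c r \ U
    · obtain ⟨yT, hyT⟩ := hT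
      have hTc : IsCompact (sphere c r \ U) := (isCompact_sphere c r).diff hUo
      have hfc : Continuous (fun y : EuclideanSpace ℝ (Fin n) =>
          ‖(y - c) - PE (y - c) - w‖) := by
        apply Continuous.norm
        exact ((continuous_id.sub continuous_const).sub
          (PE.continuous.comp (continuous_id.sub continuous_const))).sub continuous_const
      obtain ⟨ys, hys, hysmin⟩ := hTc.exists_isMinOn ⟨yT, hyT⟩ hfc.continuousOn
      obtain ⟨σ, hσdef⟩ : ∃ σ : ℝ, σ = ‖(ys - c) - PE (ys - c) - w‖ := ⟨_, rfl⟩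
      have hσ0 : 0 ≤ σ := hσdef ▸ norm_nonneg _
      have hσ : 0 < σ := by
        rcases hσ0.lt_or_eq with h | h
        · exact h
        · exfalso
          have h0 : (ys - c) - PE (ys - c) - w = 0 := by
            rw [← norm_eq_zero]
            rw [hσdef] at h
            exact h.symm
          have h2 : ys - x₀ = PE (ys - c) - PE (x₀ - c) := by
            linear_combination (norm := module) h0 - hwx₀
          rw [← map_sub] at h2
          have h3 : ys - c - (x₀ - c) = ys - x₀ := by module
          rw [h3] at h2
          have hmem : ys - x₀ ∈ W := h2 ▸ hPEW (ys - x₀)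
          have hysP : ys ∈ P := by
            have := AffineSubspace.vadd_mem_of_mem_direction hmem hx₀P
            simpa [vadd_eq_add, sub_add_cancel] using this
          exact hys.2 (hUsp ⟨hys.1, hysP⟩)
      refine ⟨(L + M + 1) / σ ^ 2, by positivity, ?_⟩
      intro y hyS hyU
      have h1 : σ ≤ ‖(y - c) - PE (y - c) - w‖ := hσdef ▸ hysmin ⟨hyS, hyU⟩
      have h2 : -(l y) ≤ L := hLb y hyS
      have h3 : (L + M + 1) / σ ^ 2 * σ ^ 2 ≤
          (L + M + 1) / σ ^ 2 * ‖(y - c) - PE (y - c) - w‖ ^ 2 :=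
        mul_le_mul_of_nonneg_left (by nlinarith) (by positivity)
      rw [div_mul_cancel₀ _ (by positivity : σ ^ 2 ≠ 0)] at h3
      linarith
    · push_neg at hT
      exact ⟨0, le_refl 0, fun y hyS hyU => absurd ⟨hyS, hyU⟩ (hT y)⟩
  -- the quadratic v₀ and φ = u + v₀
  obtain ⟨v₀, hv₀_def⟩ : ∃ v₀ : EuclideanSpace ℝ (Fin n) → ℝ, v₀ = fun z =>
      -(l z) + δ * ‖PE (z - c)‖ ^ 2 - δ * r ^ 2 - K * ‖(z - c) - PE (z - c) - w‖ ^ 2 :=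
    ⟨_, rfl⟩
  have hv₀x : ∀ z, v₀ z =
      -(l z) + δ * ‖PE (z - c)‖ ^ 2 - δ * r ^ 2 - K * ‖(z - c) - PE (z - c) - w‖ ^ 2 := by
    intro z; rw [hv₀_def]
  have hlsm : ContDiff ℝ (⊤ : ℕ∞) fun z : EuclideanSpace ℝ (Fin n) => l z := by
    have heq : (fun z : EuclideanSpace ℝ (Fin n) => l z) = fun z => l.linear z + l 0 := by
      funext z
      have := l.map_vadd 0 z
      simpa [vadd_eq_add] using this
    rw [heq]
    exact (l.linear.toContinuousLinearMap.contDiff).add contDiff_const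
  have hv₀sm : ContDiff ℝ (⊤ : ℕ∞) v₀ := by
    rw [hv₀_def]
    apply ContDiff.sub
    apply ContDiff.sub
    apply ContDiff.add
    · exact hlsm.neg
    · exact contDiff_const.mul
        ((PE.contDiff.comp (contDiff_id.sub contDiff_const)).norm_sq (𝕜 := ℝ))
    · exact contDiff_const
    · exact contDiff_const.mul
        ((((contDiff_id.sub contDiff_const).sub
          (PE.contDiff.comp (contDiff_id.sub contDiff_const))).sub contDiff_const).norm_sq
            (𝕜 := ℝ))
  have hv₀c : Continuous v₀ := hv₀sm.continuous
  obtain ⟨φ, hφ_def⟩ : ∃ φ : EuclideanSpace ℝ (Fin n) → EReal,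
      φ = fun z => u z + (v₀ z : EReal) := ⟨_, rfl⟩
  have hφx : ∀ z, φ z = u z + (v₀ z : EReal) := by intro z; rw [hφ_def]
  have hφusc : UpperSemicontinuousOn φ (closedBall c r) := by
    intro x hx y hy
    have hxω : x ∈ ω := hcB hx
    have hxtop : u x ≠ ⊤ := htop _ hxω
    rcases eq_or_ne y ⊤ with hyT | hyT
    · subst hyT
      filter_upwards [self_mem_nhdsWithin] with z hz
      rw [hφx]
      exact EReal.add_lt_top (htop _ (hcB hz)) (EReal.coe_ne_top _)
    · have hyB : y ≠ ⊥ := fun hb => by rw [hb] at hy; exact absurd hy (by simp)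
      obtain ⟨y', hy'⟩ : ∃ y' : ℝ, y = (y' : EReal) :=
        ⟨_, (EReal.coe_toReal hyT hyB).symm⟩
      have hr₁ : ∃ r₁ : ℝ, u x < (r₁ : EReal) ∧ r₁ + v₀ x < y' := by
        by_cases hbx : u x = ⊥
        · refine ⟨y' - v₀ x - 1, by rw [hbx]; exact bot_lt_iff_ne_bot.mpr (EReal.coe_ne_bot _),
            by linarith⟩
        · obtain ⟨ux, hux⟩ : ∃ ux : ℝ, u x = (ux : EReal) :=
            ⟨_, (EReal.coe_toReal hxtop hbx).symm⟩
          have hlt : ux + v₀ x < y' := by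
            have h1 : φ x < (y' : EReal) := hy' ▸ hy
            rw [hφx, hux, ← EReal.coe_add] at h1
            exact EReal.coe_lt_coe_iff.mp h1
          refine ⟨ux + (y' - ux - v₀ x) / 2, ?_, by linarith⟩
          rw [hux]
          exact EReal.coe_lt_coe_iff.mpr (by linarith)
      obtain ⟨r₁, hur₁, hr₁y⟩ := hr₁
      have hev1 : ∀ᶠ z in nhds x, u z < (r₁ : EReal) := by
        have := husc x hxω (r₁ : EReal) hur₁
        rwa [nhdsWithin_eq_nhds.mpr (hω.mem_nhds hxω)] at this
      have hev2 : ∀ᶠ z in nhds x, v₀ z < y' - r₁ :=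
        (hv₀c.tendsto x).eventually_lt_const (by linarith)
      filter_upwards [hev1.filter_mono nhdsWithin_le_nhds,
        hev2.filter_mono nhdsWithin_le_nhds] with z h1 h2
      calc φ z = u z + (v₀ z : EReal) := hφx z
      _ < (r₁ : EReal) + ((y' - r₁ : ℝ) : EReal) :=
        EReal.add_lt_add h1 (EReal.coe_lt_coe_iff.mpr h2)
      _ = (y' : EReal) := by rw [← EReal.coe_add]; norm_num
      _ = y := hy'.symm
  obtain ⟨x₁, hx₁cB, hx₁max⟩ :=
    usc_exists_max_aux (isCompact_closedBall c r) ⟨x₀, hx₀cB⟩ hφusc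
  -- lower bound for φ x₀
  have hφx₀ : ((3 * η / 4 : ℝ) : EReal) ≤ φ x₀ := by
    have h1 : φ x₀ = ((ρ + v₀ x₀ : ℝ) : EReal) := by
      rw [hφx, hρ, ← EReal.coe_add]
    rw [h1]
    apply EReal.coe_le_coe_iff.mpr
    have h2 : v₀ x₀ = -(l x₀) + δ * ‖PE (x₀ - c)‖ ^ 2 - δ * r ^ 2 := by
      rw [hv₀x, hwx₀]
      simp
    have h3 : 0 ≤ δ * ‖PE (x₀ - c)‖ ^ 2 := by positivity
    have h4 : η - δ * r ^ 2 ≤ ρ + v₀ x₀ := by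
      rw [h2, hηdef]
      linarith only [h3]
    linarith only [h4, hδr, hη]
  -- upper bound for φ on the sphere
  have hSb : ∀ y ∈ sphere c r, φ y ≤ ((η / 4 : ℝ) : EReal) := by
    intro y hyS
    have hyr : ‖y - c‖ = r := by rwa [mem_sphere, dist_eq_norm] at hyS
    have hyb : ‖PE (y - c)‖ ^ 2 ≤ r ^ 2 := by
      have := hPEn (y - c)
      rw [hyr] at this
      nlinarith [norm_nonneg (PE (y - c))]
    rw [hφx]
    by_cases hyU : y ∈ U
    · have h1 : u y < ((l y + η / 4 : ℝ) : EReal) := hUp y hyU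
      have h2 : v₀ y ≤ -(l y) := by
        rw [hv₀x]
        nlinarith [mul_nonneg hK0 (sq_nonneg ‖(y - c) - PE (y - c) - w‖)]
      refine le_of_lt ?_
      calc u y + ((v₀ y : ℝ) : EReal) ≤ u y + ((-(l y) : ℝ) : EReal) :=
          add_le_add_right (EReal.coe_le_coe_iff.mpr h2) _
      _ < ((l y + η / 4 : ℝ) : EReal) + ((-(l y) : ℝ) : EReal) :=
          EReal.add_lt_add_right_coe h1 _
      _ = ((η / 4 : ℝ) : EReal) := by rw [← EReal.coe_add]; norm_num
    · have h1 : u y ≤ (M : EReal) := hMb y hyS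
      have h2 : v₀ y ≤ -M - 1 := by
        have h3 := hKb y hyS hyU
        rw [hv₀x]
        nlinarith
      calc u y + ((v₀ y : ℝ) : EReal) ≤ (M : EReal) + ((v₀ y : ℝ) : EReal) :=
          add_le_add_left h1 _
      _ ≤ (M : EReal) + ((-M - 1 : ℝ) : EReal) :=
          add_le_add_right (EReal.coe_le_coe_iff.mpr h2) _
      _ = ((-1 : ℝ) : EReal) := by rw [← EReal.coe_add]; exact congrArg _ (by ring)
      _ ≤ ((η / 4 : ℝ) : EReal) := EReal.coe_le_coe_iff.mpr (by linarith)
  -- x₁ is in the open ball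
  have hφx₁x₀ : φ x₀ ≤ φ x₁ := hx₁max x₀ hx₀cB
  have hx₁ball : x₁ ∈ ball c r := by
    rw [mem_ball]
    rcases lt_or_eq_of_le (mem_closedBall.mp hx₁cB) with h | h
    · exact h
    · exfalso
      have hx₁S : x₁ ∈ sphere c r := by rwa [mem_sphere]
      have h1 := (hφx₀.trans hφx₁x₀).trans (hSb x₁ hx₁S)
      have := EReal.coe_le_coe_iff.mp h1
      linarith
  have hx₁ω : x₁ ∈ ω := hcB hx₁cB
  have hx₁top : u x₁ ≠ ⊤ := htop _ hx₁ω
  have hx₁bot : u x₁ ≠ ⊥ := by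
    intro hb
    have h1 : φ x₁ = ⊥ := by
      rw [hφx, hb]
      exact EReal.bot_add _
    have h2 := hφx₀.trans hφx₁x₀
    rw [h1] at h2
    exact absurd h2 (by simp)
  obtain ⟨ux₁, hux₁⟩ : ∃ ux₁ : ℝ, u x₁ = (ux₁ : EReal) :=
    ⟨_, (EReal.coe_toReal hx₁top hx₁bot).symm⟩
  obtain ⟨m', hm'eq⟩ : ∃ m' : ℝ, m' = ux₁ + v₀ x₁ := ⟨_, rfl⟩
  have hφx₁ : φ x₁ = (m' : EReal) := by
    rw [hφx, hux₁, ← EReal.coe_add, hm'eq]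
  obtain ⟨v, hv_def⟩ : ∃ v : EuclideanSpace ℝ (Fin n) → ℝ,
      v = fun z => v₀ z - m' - 2 * ε * ‖z - x₁‖ ^ 2 := ⟨_, rfl⟩
  have hvx : ∀ z, v z = v₀ z - m' - 2 * ε * ‖z - x₁‖ ^ 2 := by intro z; rw [hv_def]
  have hvsm : ContDiff ℝ (⊤ : ℕ∞) v := by
    rw [hv_def]
    apply ContDiff.sub
    apply ContDiff.sub hv₀sm contDiff_const
    exact contDiff_const.mul ((contDiff_id.sub contDiff_const).norm_sq (𝕜 := ℝ))
  refine ⟨c, x₁, r, ε, hr, hε, hsub, hx₁ball, v, hvsm, ?_, ?_, ?_⟩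
  · -- the maximum principle for v
    intro Q hQ c' r' hr' l' hsph' x hx
    have hdim : n ≤ Module.finrank ℝ W + (n - q - 1) := by omega
    apply quad_max_principle_aux W hdim v ?_ Q hQ c' r' hr' l' hsph' x hx
    intro e he x
    refine ⟨(δ - 2 * ε) * ‖e‖ ^ 2,
      2 * δ * ⟪PE (x - c), e⟫ - 4 * ε * ⟪x - x₁, e⟫ - l.linear e, ?_, ?_⟩
    · have h0 : 0 ≤ δ - 2 * ε := by linarith
      positivity
    · intro t
      have h1 : x + t • e - c = (x - c) + t • e := by abel
      have h2 : x + t • e - x₁ = (x - x₁) + t • e := by abel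
      have h3 : PE ((x - c) + t • e) = PE (x - c) + t • e := by
        rw [map_add, map_smul, hPEe e he]
      have h4 : ((x - c) + t • e) - PE ((x - c) + t • e) - w
          = (x - c) - PE (x - c) - w := by rw [h3]; abel
      have h5 : l (x + t • e) = t * l.linear e + l x := by
        have := l.map_vadd x (t • e)
        simpa [vadd_eq_add, add_comm, map_smul, smul_eq_mul] using this
      rw [hvx, hvx, hv₀x, hv₀x, h1, h2, h4, h3, h5,
        norm_add_smul_sq_aux, norm_add_smul_sq_aux]
      ring
  · -- value at x₁
    have hx1 : v x₁ = v₀ x₁ - m' := by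
      rw [hvx, sub_self, norm_zero]
      ring
    rw [hx1, hux₁, ← EReal.coe_add]
    have : ux₁ + (v₀ x₁ - m') = 0 := by rw [hm'eq]; ring
    rw [this]
    rfl
  · -- the strict decay inequality
    intro z hz
    obtain ⟨hzb, hzne'⟩ := hz
    have hzne : z ≠ x₁ := by simpa using hzne'
    have hd : 0 < ‖z - x₁‖ := by
      rw [norm_pos_iff]
      exact sub_ne_zero.mpr hzne
    have h1 : φ z ≤ (m' : EReal) := hφx₁ ▸ hx₁max z (ball_subset_closedBall hzb)
    have hsplit : ((v z : ℝ) : EReal)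
        = ((v₀ z : ℝ) : EReal) + ((-m' - 2 * ε * ‖z - x₁‖ ^ 2 : ℝ) : EReal) := by
      rw [← EReal.coe_add, hvx]
      exact congrArg _ (by ring)
    calc u z + ((v z : ℝ) : EReal)
        = φ z + ((-m' - 2 * ε * ‖z - x₁‖ ^ 2 : ℝ) : EReal) := by
          rw [hsplit, hφx, ← add_assoc]
    _ ≤ (m' : EReal) + ((-m' - 2 * ε * ‖z - x₁‖ ^ 2 : ℝ) : EReal) :=
        add_le_add_left h1 _
    _ = ((-(2 * ε * ‖z - x₁‖ ^ 2) : ℝ) : EReal) := by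
        rw [← EReal.coe_add]
        exact congrArg _ (by ring)
    _ < ((-ε * ‖z - x₁‖ ^ 2 : ℝ) : EReal) := by
        rw [EReal.coe_lt_coe_iff]
        nlinarith [mul_pos hε (pow_pos hd 2)]

/-- If an upper semicontinuous `u` is not real q-convex on `ω`, then there are a ball
`B ⋐ ω`, a point `x₁ ∈ B`, a number `ε > 0` and a C^∞-smooth real `(n-q-1)`-convex
function `v` on `ℝⁿ` with `(u+v)(x₁) = 0` and `(u+v)(x) < -ε‖x - x₁‖²` on `B ∖ {x₁}`. -/
theorem exists_smooth_majorant_of_not_realQConvexOn {n q : ℕ} (hq : q < n)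
    (ω : Set (EuclideanSpace ℝ (Fin n))) (hω : IsOpen ω)
    (u : EuclideanSpace ℝ (Fin n) → EReal)
    (husc : UpperSemicontinuousOn u ω) (htop : ∀ x ∈ ω, u x ≠ ⊤)
    (hnot : ¬ RealQConvexOn q u ω) :
    ∃ (c x₁ : EuclideanSpace ℝ (Fin n)) (r ε : ℝ), 0 < r ∧ 0 < ε ∧
      closure (Metric.ball c r) ⊆ ω ∧ x₁ ∈ Metric.ball c r ∧
      ∃ v : EuclideanSpace ℝ (Fin n) → ℝ, ContDiff ℝ (⊤ : ℕ∞) v ∧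
        RealQConvexOn (n - q - 1) (fun x => (v x : EReal)) Set.univ ∧
        u x₁ + (v x₁ : EReal) = 0 ∧
        ∀ x ∈ Metric.ball c r \ {x₁},
          u x + (v x : EReal) < ((-ε * ‖x - x₁‖ ^ 2 : ℝ) : EReal) := by
  have hC : ¬ ∀ P : AffineSubspace ℝ (EuclideanSpace ℝ (Fin n)),
      Module.finrank ℝ P.direction = q + 1 →
      ∀ (c : EuclideanSpace ℝ (Fin n)) (r : ℝ), 0 < r → closure (Metric.ball c r) ⊆ ω →
        ∀ l : EuclideanSpace ℝ (Fin n) →ᵃ[ℝ] ℝ,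
          (∀ x ∈ Metric.sphere c r ∩ (P : Set (EuclideanSpace ℝ (Fin n))), u x ≤ (l x : EReal)) →
          ∀ x ∈ Metric.closedBall c r ∩ (P : Set (EuclideanSpace ℝ (Fin n))),
            u x ≤ (l x : EReal) := fun h => hnot ⟨htop, husc, h⟩
  obtain ⟨c, x₁, r, ε, hr, hε, hsub, hx₁b, v, hvsm, hmax, hval, hineq⟩ :=
    main_aux hq ω hω u husc htop hC
  refine ⟨c, x₁, r, ε, hr, hε, hsub, hx₁b, v, hvsm,
    ⟨fun x _ => EReal.coe_ne_top _, ?_, ?_⟩, hval, hineq⟩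
  · exact (Continuous.upperSemicontinuous
      (continuous_coe_real_ereal.comp hvsm.continuous)).upperSemicontinuousOn Set.univ
  · intro P hP c' r' hr' _ l hl x hx
    exact EReal.coe_le_coe_iff.mpr
      (hmax P hP c' r' hr' l (fun y hy => EReal.coe_le_coe_iff.mp (hl y hy)) x hx)
end
end

section
/- Let u be a real q-convex function on an open set ω ⊆ ℝⁿ, let D be a relatively compact open subset of ω, and let f be a continuous real-valued function on ω such that u < f on an open neighborhood of cl(D). Then there exist L > 0 and a continuous function ũ ∈ C¹_L(ℝⁿ) which is real q-convex on an open neighborhood of cl(D) and satisfies u < ũ < f on cl(D). -/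
open Metric Set Filter

noncomputable section

/-- `g ∈ C¹_L(ω)`: the function `x ↦ g(x) + (L/2)‖x‖²` is locally convex on `ω`
(functions with lower bounded Hessian). -/
def MemC1L {E : Type*} [NormedAddCommGroup E] [NormedSpace ℝ E]
    (L : ℝ) (g : E → ℝ) (ω : Set E) : Prop :=
  ∀ x ∈ ω, ∃ U, IsOpen U ∧ x ∈ U ∧ U ⊆ ω ∧ Convex ℝ U ∧
    ConvexOn ℝ U fun y => g y + L / 2 * ‖y‖ ^ 2

/-- The supremum convolution `(u ∗ g)(x) = sup_y u(y)·g(x−y)` of two nonnegative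
functions defined on all of the space. -/
def supConv {E : Type*} [NormedAddCommGroup E] (u g : E → ℝ) (x : E) : ℝ :=
  ⨆ y : E, u y * g (x - y)

/-!
Truncating `u` from below and lifting it by a fraction of its gap to `f` gives a real-valued,
bounded, real `q`-convex `g` on `ω` with `u < g` and `g + η ≤ f` on a compact neighbourhood `K`
of `cl D`. Its upper Moreau envelope `S x = sup_{y ∈ K} g y - ‖x - y‖² / (2t)` is a supremum of
functions `x ↦ (affine) - ‖x‖² / (2t)`, so `S ∈ C¹_{1/t}`. As `g` has bounded oscillation, for
small `t` the supremum at `x ∈ K` is attained at some `y` with `‖x - y‖ ≤ σ`. Then `g ≤ S ≤ g y < f`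
on `cl D` by uniform continuity of `f`, and near `cl D` the envelope inherits the maximum
principle from the real `q`-convex translate `g (· - (x - y)) - ‖x - y‖² / (2t) ≤ S`, which
touches `S` at `x`.
-/

theorem upperSemicontinuousOn_coe_ereal_iff {X : Type*} [TopologicalSpace X] {g : X → ℝ}
    {s : Set X} : UpperSemicontinuousOn (fun x => (g x : EReal)) s ↔ UpperSemicontinuousOn g s :=
  ⟨fun h x hx a ha => (h x hx a (EReal.coe_lt_coe_iff.2 ha)).mono fun _ => EReal.coe_lt_coe_iff.1,
    fun h => continuous_coe_real_ereal.comp_upperSemicontinuousOn h EReal.coe_strictMono.monotone⟩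

theorem IsCompact.exists_pos_forall_add_le {X : Type*} [TopologicalSpace X] {K : Set X}
    (hK : IsCompact K) {φ ψ : X → ℝ} (hφ : UpperSemicontinuousOn φ K) (hψ : ContinuousOn ψ K)
    (h : ∀ x ∈ K, φ x < ψ x) : ∃ η > 0, ∀ x ∈ K, φ x + η ≤ ψ x := by
  rcases K.eq_empty_or_nonempty with rfl | hne
  · exact ⟨1, one_pos, by simp⟩
  obtain ⟨z, hz, hmax⟩ := (hφ.add hψ.neg.upperSemicontinuousOn).exists_isMaxOn hne hK
  refine ⟨ψ z - φ z, sub_pos.2 (h z hz), fun x hx => ?_⟩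
  have : φ x + -ψ x ≤ φ z + -ψ z := hmax hx
  linarith

theorem exists_pos_forall_mul_sub_le {X : Type*} {K : Set X} {g : X → ℝ}
    (hM : BddAbove (g '' K)) (hm : BddBelow (g '' K)) {ε : ℝ} (hε : 0 < ε) :
    ∃ t > 0, ∀ x ∈ K, ∀ y ∈ K, t * (g y - g x) ≤ ε := by
  obtain ⟨M, hM⟩ := hM
  obtain ⟨m, hm⟩ := hm
  obtain ⟨t, ht, htε⟩ := exists_pos_mul_lt hε (M - m)
  refine ⟨t, ht, fun x hx y hy => ?_⟩
  have hgy := hM (mem_image_of_mem g hy)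
  have hgx := hm (mem_image_of_mem g hx)
  nlinarith

theorem convexOn_ciSup_add {E ι : Type*} [AddCommMonoid E] [Module ℝ E] [Nonempty ι]
    {s : Set E} {f : ι → E → ℝ} {q : E → ℝ} (hf : ∀ i, ConvexOn ℝ s fun x => f i x + q x)
    (hbdd : ∀ x ∈ s, BddAbove (range fun i => f i x)) :
    ConvexOn ℝ s fun x => (⨆ i, f i x) + q x := by
  refine ⟨(hf (Classical.arbitrary ι)).1, fun x hx y hy a b ha hb hab => ?_⟩
  simp only [smul_eq_mul]
  suffices h : ∀ i, f i (a • x + b • y) ≤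
      a * ((⨆ i, f i x) + q x) + b * ((⨆ i, f i y) + q y) - q (a • x + b • y) by
    linarith [ciSup_le h]
  intro i
  have hi : f i (a • x + b • y) + q (a • x + b • y) ≤ a * (f i x + q x) + b * (f i y + q y) :=
    (hf i).2 hx hy ha hb hab
  nlinarith [le_ciSup (hbdd x hx) i, le_ciSup (hbdd y hy) i]

theorem exists_nonneg_add_smul_mem_sphere {E : Type*} [NormedAddCommGroup E] [NormedSpace ℝ E]
    {c x w : E} {r : ℝ} (hx : x ∈ closedBall c r) (hw : w ≠ 0) :
    ∃ t : ℝ, 0 ≤ t ∧ x + t • w ∈ sphere c r := by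
  have hxc : dist x c ≤ r := hx
  set T := (r + dist x c) / ‖w‖
  have hT : 0 ≤ T := div_nonneg (by linarith [dist_nonneg (x := x) (y := c)]) (norm_nonneg w)
  have hTw : r ≤ dist (x + T • w) c := by
    have hnorm : ‖T • w‖ = r + dist x c := by
      rw [norm_smul, Real.norm_of_nonneg hT, div_mul_cancel₀ _ (norm_ne_zero_iff.2 hw)]
    have := dist_triangle (x + T • w) c x
    rw [dist_self_add_left, hnorm, dist_comm c] at this
    linarith
  obtain ⟨t, ht, hdist⟩ := intermediate_value_Icc hT
    (f := fun t : ℝ => dist (x + t • w) c) (by fun_prop) ⟨by simpa using hxc, hTw⟩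
  exact ⟨t, ht.1, hdist⟩

theorem AffineMap.ge_on_closedBall_inter_of_ge_on_sphere_inter {E : Type*}
    [NormedAddCommGroup E] [NormedSpace ℝ E] {P : AffineSubspace ℝ E} (hP : P.direction ≠ ⊥)
    {c : E} {r m : ℝ} {l : E →ᵃ[ℝ] ℝ} (hm : ∀ x ∈ sphere c r ∩ P, m ≤ l x) :
    ∀ x ∈ closedBall c r ∩ P, m ≤ l x := by
  rintro x ⟨hx, hxP⟩
  -- walk from `x` to the sphere inside `P` in a direction along which `l` does not increase
  obtain ⟨w, hwP, hw0, hlw⟩ : ∃ w ∈ P.direction, w ≠ 0 ∧ l.linear w ≤ 0 := by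
    obtain ⟨w, hwP, hw0⟩ := Submodule.exists_mem_ne_zero_of_ne_bot hP
    rcases le_total (l.linear w) 0 with h | h
    · exact ⟨w, hwP, hw0, h⟩
    · exact ⟨-w, P.direction.neg_mem hwP, neg_ne_zero.2 hw0, by simpa using h⟩
  obtain ⟨t, ht, hts⟩ := exists_nonneg_add_smul_mem_sphere hx hw0
  have hmem : x + t • w ∈ P := by
    simpa [vadd_eq_add, add_comm] using
      AffineSubspace.vadd_mem_of_mem_direction (P.direction.smul_mem t hwP) hxP
  have hl : l (x + t • w) = t * l.linear w + l x := by
    simpa [vadd_eq_add, add_comm] using l.map_vadd x (t • w)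
  nlinarith [hm _ ⟨hts, hmem⟩]

section RealQConvex

variable {E : Type*} [NormedAddCommGroup E] [NormedSpace ℝ E] {q : ℕ} {ω : Set E}

theorem realQConvexOn_coe_iff {g : E → ℝ} :
    RealQConvexOn q (fun x => (g x : EReal)) ω ↔ UpperSemicontinuousOn g ω ∧
      ∀ P : AffineSubspace ℝ E, Module.finrank ℝ P.direction = q + 1 →
        ∀ (c : E) (r : ℝ), 0 < r → closure (ball c r) ⊆ ω → ∀ l : E →ᵃ[ℝ] ℝ,
          (∀ x ∈ sphere c r ∩ (P : Set E), g x ≤ l x) →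
          ∀ x ∈ closedBall c r ∩ (P : Set E), g x ≤ l x := by
  simp only [RealQConvexOn, EReal.coe_le_coe_iff, upperSemicontinuousOn_coe_ereal_iff, ne_eq,
    EReal.coe_ne_top, not_false_eq_true, implies_true, true_and]

theorem RealQConvexOn.congr {u v : E → EReal} (hu : RealQConvexOn q u ω) (h : EqOn u v ω) :
    RealQConvexOn q v ω := by
  obtain ⟨hne, husc, hmax⟩ := hu
  refine ⟨fun x hx => h hx ▸ hne x hx,
    fun x hx => UpperSemicontinuousWithinAt.congr_of_eventuallyEq (husc x hx) hx
      (eventually_nhdsWithin_of_forall h), ?_⟩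
  intro P hP c r hr hsub l hl x hx
  have hball : closedBall c r ⊆ ω := closure_ball c hr.ne' ▸ hsub
  rw [← h (hball hx.1)]
  exact hmax P hP c r hr hsub l
    (fun y hy => (h (hball (sphere_subset_closedBall hy.1))).symm ▸ hl y hy) x hx

theorem RealQConvexOn.sup_const {u : E → EReal} (hu : RealQConvexOn q u ω) (m : ℝ) :
    RealQConvexOn q (fun x => u x ⊔ (m : EReal)) ω := by
  obtain ⟨hne, husc, hmax⟩ := hu
  refine ⟨fun x hx => (sup_lt_iff.2 ⟨(hne x hx).lt_top, EReal.coe_lt_top m⟩).ne,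
    (continuous_id.sup continuous_const).comp_upperSemicontinuousOn husc
      fun _ _ h => sup_le_sup_right h _, ?_⟩
  intro P hP c r hr hsub l hl x hx
  have hP0 : P.direction ≠ ⊥ := fun h => by rw [h, finrank_bot] at hP; omega
  refine sup_le (hmax P hP c r hr hsub l (fun y hy => le_sup_left.trans (hl y hy)) x hx) ?_
  exact EReal.coe_le_coe_iff.2 (l.ge_on_closedBall_inter_of_ge_on_sphere_inter hP0
    (fun y hy => EReal.coe_le_coe_iff.1 (le_sup_right.trans (hl y hy))) x hx)

theorem RealQConvexOn.coe_toReal_sup_const {u : E → EReal} (hu : RealQConvexOn q u ω) (m : ℝ)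
    {x : E} (hx : x ∈ ω) : ((u x ⊔ (m : EReal)).toReal : EReal) = u x ⊔ m :=
  EReal.coe_toReal ((hu.sup_const m).1 x hx) (ne_bot_of_le_ne_bot (EReal.coe_ne_bot m) le_sup_right)

theorem RealQConvexOn.toReal_sup_const {u : E → EReal} (hu : RealQConvexOn q u ω) (m : ℝ) :
    RealQConvexOn q (fun x => ((u x ⊔ (m : EReal)).toReal : EReal)) ω :=
  (hu.sup_const m).congr fun _ hx => (hu.coe_toReal_sup_const m hx).symm

theorem RealQConvexOn.coe_add_const {g : E → ℝ} (hg : RealQConvexOn q (fun x => (g x : EReal)) ω)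
    (a : ℝ) : RealQConvexOn q (fun x => ((g x + a : ℝ) : EReal)) ω := by
  rw [realQConvexOn_coe_iff] at hg ⊢
  refine ⟨hg.1.add continuousOn_const.upperSemicontinuousOn,
    fun P hP c r hr hsub l hl x hx => ?_⟩
  have := hg.2 P hP c r hr hsub (l - AffineMap.const ℝ E a)
    (fun y hy => by simp only [AffineMap.coe_sub, AffineMap.coe_const, Pi.sub_apply,
      Function.const_apply]; linarith [hl y hy]) x hx
  simp only [AffineMap.coe_sub, AffineMap.coe_const, Pi.sub_apply, Function.const_apply] at this
  linarith

theorem RealQConvexOn.exists_real_between {u : E → EReal} (hu : RealQConvexOn q u ω)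
    {K : Set E} (hK : IsCompact K) (hKω : K ⊆ ω) {f : E → ℝ} (hf : ContinuousOn f K)
    (huf : ∀ x ∈ K, u x < f x) :
    ∃ (g : E → ℝ) (η : ℝ), 0 < η ∧ RealQConvexOn q (fun x => (g x : EReal)) ω ∧
      BddBelow (g '' K) ∧ ∀ x ∈ K, u x < g x ∧ g x + η ≤ f x := by
  obtain ⟨b, hb⟩ := hK.bddBelow_image hf
  set m := b - 1
  have hmf : ∀ x ∈ K, m < f x := fun x hx => by linarith [hb (mem_image_of_mem f hx)]
  set ut := fun x => (u x ⊔ (m : EReal)).toReal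
  have hut : RealQConvexOn q (fun x => (ut x : EReal)) ω := hu.toReal_sup_const m
  have hut_eq : ∀ x ∈ ω, (ut x : EReal) = u x ⊔ m := fun _ hx => hu.coe_toReal_sup_const m hx
  have hutf : ∀ x ∈ K, ut x < f x := fun x hx => by
    have : (ut x : EReal) < f x := by
      rw [hut_eq x (hKω hx)]
      exact sup_lt_iff.2 ⟨huf x hx, EReal.coe_lt_coe_iff.2 (hmf x hx)⟩
    exact_mod_cast this
  obtain ⟨η, hη, hutη⟩ :=
    hK.exists_pos_forall_add_le ((realQConvexOn_coe_iff.1 hut).1.mono hKω) hf hutf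
  refine ⟨fun x => ut x + η / 2, η / 2, half_pos hη, hut.coe_add_const _, ⟨m + η / 2, ?_⟩,
    fun x hx => ⟨?_, by linarith [hutη x hx]⟩⟩
  · rintro _ ⟨x, hx, rfl⟩
    have : (m : EReal) ≤ ut x := hut_eq x (hKω hx) ▸ le_sup_right
    simp only
    linarith [EReal.coe_le_coe_iff.1 this]
  · calc u x ≤ ut x := hut_eq x (hKω hx) ▸ le_sup_left
      _ < (ut x + η / 2 : ℝ) := EReal.coe_lt_coe_iff.2 (by linarith)

end RealQConvex

section QuadSupConv

variable {E : Type*} [NormedAddCommGroup E] {K : Set E} {g : E → ℝ} {t : ℝ}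

/-- The upper Moreau envelope of `g` over `K` with parameter `t`; it is the junk value `0` when
`K = ∅`. -/
def quadSupConv (K : Set E) (g : E → ℝ) (t : ℝ) (x : E) : ℝ :=
  ⨆ y : K, g y - ‖x - y‖ ^ 2 / (2 * t)

theorem bddAbove_range_quadSupConv (hg : BddAbove (g '' K)) (ht : 0 ≤ t) (x : E) :
    BddAbove (range fun y : K => g y - ‖x - y‖ ^ 2 / (2 * t)) := by
  obtain ⟨M, hM⟩ := hg
  refine ⟨M, ?_⟩
  rintro _ ⟨y, rfl⟩
  have : 0 ≤ ‖x - y‖ ^ 2 / (2 * t) := by positivity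
  linarith [hM (mem_image_of_mem g y.2)]

theorem le_quadSupConv (hg : BddAbove (g '' K)) (ht : 0 ≤ t) {y : E} (hy : y ∈ K) (x : E) :
    g y - ‖x - y‖ ^ 2 / (2 * t) ≤ quadSupConv K g t x :=
  le_ciSup (bddAbove_range_quadSupConv hg ht x) (⟨y, hy⟩ : K)

theorem self_le_quadSupConv (hg : BddAbove (g '' K)) (ht : 0 ≤ t) {x : E} (hx : x ∈ K) :
    g x ≤ quadSupConv K g t x := by
  simpa using le_quadSupConv hg ht hx x

theorem exists_quadSupConv_eq (hK : IsCompact K) (hne : K.Nonempty)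
    (hg : UpperSemicontinuousOn g K) (ht : 0 ≤ t) (x : E) :
    ∃ y ∈ K, quadSupConv K g t x = g y - ‖x - y‖ ^ 2 / (2 * t) := by
  have hφ : UpperSemicontinuousOn (fun y => g y - ‖x - y‖ ^ 2 / (2 * t)) K := by
    simpa only [sub_eq_add_neg] using
      hg.add (Continuous.continuousOn (by fun_prop)).upperSemicontinuousOn
  obtain ⟨y, hy, hmax⟩ := hφ.exists_isMaxOn hne hK
  have := hne.to_subtype
  exact ⟨y, hy, le_antisymm (ciSup_le fun z => hmax z.2)
    (le_quadSupConv (hg.bddAbove_of_isCompact hK) ht hy x)⟩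

theorem exists_near_quadSupConv_eq (hK : IsCompact K) (hg : UpperSemicontinuousOn g K)
    (ht : 0 < t) {σ : ℝ} (hσ : 0 ≤ σ) (hosc : ∀ x ∈ K, ∀ y ∈ K, t * (g y - g x) ≤ σ ^ 2 / 2)
    {x : E} (hx : x ∈ K) :
    ∃ y ∈ K, ‖x - y‖ ≤ σ ∧ quadSupConv K g t x = g y - ‖x - y‖ ^ 2 / (2 * t) := by
  obtain ⟨y, hy, hxy⟩ := exists_quadSupConv_eq hK ⟨x, hx⟩ hg ht.le x
  refine ⟨y, hy, ?_, hxy⟩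
  have hgx := self_le_quadSupConv (hg.bddAbove_of_isCompact hK) ht.le hx
  have : ‖x - y‖ ^ 2 / (2 * t) * (2 * t) = ‖x - y‖ ^ 2 := div_mul_cancel₀ _ (by positivity)
  refine le_of_sq_le_sq ?_ hσ
  nlinarith [hosc x hx y hy]

section InnerProductSpace

variable [InnerProductSpace ℝ E]

theorem convexOn_quadSupConv_add_sq (hg : BddAbove (g '' K)) (ht : 0 < t) :
    ConvexOn ℝ univ fun x => quadSupConv K g t x + t⁻¹ / 2 * ‖x‖ ^ 2 := by
  rcases isEmpty_or_nonempty K with hK | hK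
  · simp only [quadSupConv, Real.iSup_of_isEmpty, zero_add]
    exact (convexOn_univ_norm.pow (fun _ _ => norm_nonneg _) 2).smul (by positivity)
  refine convexOn_ciSup_add (fun y => ?_) fun x _ => bddAbove_range_quadSupConv hg ht.le x
  -- each term is affine: expanding the square cancels the quadratic part
  refine ((convexOn_const (g y - ‖(y : E)‖ ^ 2 / (2 * t)) convex_univ).add
    ((t⁻¹ • innerₛₗ ℝ (y : E)).convexOn convex_univ)).congr fun x _ => ?_
  simp only [Pi.add_apply, LinearMap.smul_apply, coe_innerₛₗ_apply, smul_eq_mul, norm_sub_sq_real,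
    real_inner_comm (y : E) x]
  field_simp
  ring

theorem continuous_quadSupConv [FiniteDimensional ℝ E] (hg : BddAbove (g '' K)) (ht : 0 < t) :
    Continuous (quadSupConv K g t) := by
  have h := continuousOn_univ.1 ((convexOn_quadSupConv_add_sq hg ht).continuousOn isOpen_univ)
  exact (h.sub (continuous_const.mul (continuous_norm.pow 2))).congr fun _ =>
    add_sub_cancel_right _ _

theorem realQConvexOn_quadSupConv [FiniteDimensional ℝ E] {q : ℕ} {ω V : Set E} {σ : ℝ}
    (hK : IsCompact K) (hKω : K ⊆ ω) (hg : RealQConvexOn q (fun x => (g x : EReal)) ω)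
    (ht : 0 < t) (hσ : 0 ≤ σ) (hosc : ∀ x ∈ K, ∀ y ∈ K, t * (g y - g x) ≤ σ ^ 2 / 2)
    (hV : cthickening σ V ⊆ K) :
    RealQConvexOn q (fun x => (quadSupConv K g t x : EReal)) V := by
  rw [realQConvexOn_coe_iff] at hg ⊢
  have hgK : UpperSemicontinuousOn g K := hg.1.mono hKω
  have hgb : BddAbove (g '' K) := hgK.bddAbove_of_isCompact hK
  refine ⟨(continuous_quadSupConv hgb ht).continuousOn.upperSemicontinuousOn, ?_⟩
  intro P hP c r hr hsub l hl x ⟨hx, hxP⟩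
  have hcr : closedBall c r ⊆ V := closure_ball c hr.ne' ▸ hsub
  obtain ⟨y, hyK, hxy, hSx⟩ := exists_near_quadSupConv_eq hK hgK ht hσ hosc
    (hV (self_subset_cthickening V (hcr hx)))
  set z := x - y
  have hball : closedBall (c - z) r ⊆ K := fun p hp => by
    refine hV (mem_cthickening_of_dist_le p (z + p) σ V (hcr ?_) ?_)
    · rwa [mem_closedBall_iff_norm, show z + p - c = p - (c - z) by abel, ← mem_closedBall_iff_norm]
    · rwa [dist_comm, dist_add_self_left]
  set l' : E →ᵃ[ℝ] ℝ :=
    l.comp (AffineEquiv.constVAdd ℝ E z).toAffineMap + AffineMap.const ℝ E (‖z‖ ^ 2 / (2 * t))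
  have hl' : ∀ p, l' p = l (z + p) + ‖z‖ ^ 2 / (2 * t) := fun p => rfl
  have key := hg.2 (AffineSubspace.mk' y P.direction) (by rwa [AffineSubspace.direction_mk'])
    (c - z) r hr (by rw [closure_ball _ hr.ne']; exact hball.trans hKω) l' ?_ y
    ⟨by rwa [mem_closedBall_iff_norm, show y - (c - z) = x - c by simp only [z]; abel,
        ← mem_closedBall_iff_norm], AffineSubspace.self_mem_mk' _ _⟩
  · rw [hl', sub_add_cancel] at key
    rw [hSx]
    linarith
  · rintro p ⟨hp, hpP⟩
    have hzp : z + p ∈ sphere c r ∩ P := by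
      refine ⟨?_, ?_⟩
      · rwa [mem_sphere_iff_norm, show z + p - c = p - (c - z) by abel, ← mem_sphere_iff_norm]
      · rw [SetLike.mem_coe, AffineSubspace.mem_mk'] at hpP
        have := AffineSubspace.vadd_mem_of_mem_direction hpP hxP
        rwa [vsub_eq_sub, vadd_eq_add, show p - y + x = z + p by simp only [z]; abel] at this
    have := le_quadSupConv hgb ht.le (hball (sphere_subset_closedBall hp)) (z + p)
    rw [add_sub_cancel_right] at this
    rw [hl']
    linarith [hl _ hzp]

theorem memC1L_quadSupConv (hg : BddAbove (g '' K)) (ht : 0 < t) :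
    MemC1L t⁻¹ (quadSupConv K g t) univ := fun x _ =>
  ⟨univ, isOpen_univ, mem_univ x, subset_rfl, convex_univ, convexOn_quadSupConv_add_sq hg ht⟩

end InnerProductSpace

end QuadSupConv

theorem realQConvexOn_approx_general {n q : ℕ}
    (ω D : Set (EuclideanSpace ℝ (Fin n)))
    (hDcpt : IsCompact (closure D))
    (u : EuclideanSpace ℝ (Fin n) → EReal) (hu : RealQConvexOn q u ω)
    (f : EuclideanSpace ℝ (Fin n) → ℝ) (hf : ContinuousOn f ω)
    (W : Set (EuclideanSpace ℝ (Fin n))) (hW : IsOpen W)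
    (hDW : closure D ⊆ W) (hWω : W ⊆ ω)
    (huf : ∀ x ∈ W, u x < (f x : EReal)) :
    ∃ L : ℝ, 0 < L ∧ ∃ v : EuclideanSpace ℝ (Fin n) → ℝ,
      Continuous v ∧ MemC1L L v Set.univ ∧
      (∃ V, IsOpen V ∧ closure D ⊆ V ∧
        RealQConvexOn q (fun x => (v x : EReal)) V) ∧
      ∀ x ∈ closure D, u x < (v x : EReal) ∧ v x < f x := by
  obtain ⟨ρ, hρ, hKW⟩ := hDcpt.exists_cthickening_subset_open hW hDW
  set K := cthickening ρ (closure D)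
  have hK : IsCompact K := hDcpt.cthickening
  have hKω : K ⊆ ω := hKW.trans hWω
  obtain ⟨g, η, hη, hgq, hgm, hug⟩ :=
    hu.exists_real_between hK hKω (hf.mono hKω) fun x hx => huf x (hKW hx)
  have hgK : UpperSemicontinuousOn g K := (realQConvexOn_coe_iff.1 hgq).1.mono hKω
  have hgM : BddAbove (g '' K) := hgK.bddAbove_of_isCompact hK
  obtain ⟨δ, hδ, hfδ⟩ := Metric.uniformContinuousOn_iff_le.1
    (hK.uniformContinuousOn_of_continuous (hf.mono hKω)) (η / 2) (half_pos hη)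
  set σ := min (ρ / 2) δ
  have hσ : 0 < σ := lt_min (half_pos hρ) hδ
  obtain ⟨t, ht, hosc⟩ := exists_pos_forall_mul_sub_le hgM hgm (by positivity : 0 < σ ^ 2 / 2)
  have hV : cthickening σ (thickening (ρ / 2) (closure D)) ⊆ K :=
    (cthickening_thickening_subset hσ.le _ _).trans
      (cthickening_mono (by linarith [min_le_left (ρ / 2) δ]) _)
  refine ⟨t⁻¹, inv_pos.2 ht, quadSupConv K g t, continuous_quadSupConv hgM ht,
    memC1L_quadSupConv hgM ht, ⟨_, isOpen_thickening, self_subset_thickening (half_pos hρ) _,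
      realQConvexOn_quadSupConv hK hKω hgq ht hσ.le hosc hV⟩, fun x hx => ?_⟩
  have hxK : x ∈ K := self_subset_cthickening _ hx
  obtain ⟨y, hyK, hxy, hSx⟩ := exists_near_quadSupConv_eq hK hgK ht hσ.le hosc hxK
  refine ⟨(hug x hxK).1.trans_le (EReal.coe_le_coe_iff.2 (self_le_quadSupConv hgM ht.le hxK)), ?_⟩
  have hfy := abs_le.1 (hfδ y hyK x hxK (by
    rw [dist_comm, dist_eq_norm]; exact hxy.trans (min_le_right _ _)))
  have : 0 ≤ ‖x - y‖ ^ 2 / (2 * t) := by positivity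
  rw [hSx]
  linarith [(hug y hyK).2]

/-- Approximation: if `u` is real q-convex on `ω`, `D ⋐ ω` is open, `f` is continuous on
`ω` and `u < f` on an open neighborhood `W` of `cl(D)`, then there are `L > 0` and a
continuous `ũ ∈ C¹_L(ℝⁿ)` which is real q-convex on a neighborhood of `cl(D)` and satisfies
`u < ũ < f` on `cl(D)`. -/
theorem realQConvexOn_approx {n q : ℕ}
    (ω D : Set (EuclideanSpace ℝ (Fin n))) (hω : IsOpen ω) (hD : IsOpen D)
    (hDsub : closure D ⊆ ω) (hDcpt : IsCompact (closure D))
    (u : EuclideanSpace ℝ (Fin n) → EReal) (hu : RealQConvexOn q u ω)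
    (f : EuclideanSpace ℝ (Fin n) → ℝ) (hf : ContinuousOn f ω)
    (W : Set (EuclideanSpace ℝ (Fin n))) (hW : IsOpen W)
    (hDW : closure D ⊆ W) (hWω : W ⊆ ω)
    (huf : ∀ x ∈ W, u x < (f x : EReal)) :
    ∃ L : ℝ, 0 < L ∧ ∃ v : EuclideanSpace ℝ (Fin n) → ℝ,
      Continuous v ∧ MemC1L L v Set.univ ∧
      (∃ V, IsOpen V ∧ closure D ⊆ V ∧
        RealQConvexOn q (fun x => (v x : EReal)) V) ∧
      ∀ x ∈ closure D, u x < (v x : EReal) ∧ v x < f x :=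
  realQConvexOn_approx_general ω D hDcpt u hu f hf W hW hDW hWω huf
end
end

section
/- Let ω be a nonempty open proper subset of ℝⁿ, let ‖·‖ be an arbitrary norm on ℝⁿ, and let v ∈ ℝⁿ with ‖v‖₂ = 1. Then the following four functions are real (n−1)-convex on ω: x ↦ −R_v(x,∂ω), x ↦ −d_{‖·‖}(x,∂ω), x ↦ −ln R_v(x,∂ω), and x ↦ −ln d_{‖·‖}(x,∂ω). In particular, every open set in ℝⁿ is a real (n−1)-convex set. -/
open Metric Set Filter

noncomputable section

open Classical in
/-- `negDistE S x = -dist(x, S)` (Euclidean/norm distance), with value `−∞` if `S = ∅`. -/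
def negDistE {E : Type*} [NormedAddCommGroup E] (S : Set E) (x : E) : EReal :=
  if S.Nonempty then (↑(-Metric.infDist x S) : EReal) else ⊥

open Classical in
/-- `negLogDistE S x = -ln dist(x, S)`, with value `−∞` if `S = ∅` (as `-ln (+∞) = −∞`). -/
def negLogDistE {E : Type*} [NormedAddCommGroup E] (S : Set E) (x : E) : EReal :=
  if S.Nonempty then (↑(-Real.log (Metric.infDist x S)) : EReal) else ⊥

/-- An open set `ω` is a *real q-convex set* if `x ↦ -ln d₂(x, ∂ω)` is real q-convex on `ω`. -/
def RealQConvexSet {E : Type*} [NormedAddCommGroup E] [NormedSpace ℝ E]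
    (q : ℕ) (ω : Set E) : Prop :=
  IsOpen ω ∧ RealQConvexOn q (fun x => negLogDistE (frontier ω) x) ω
open Classical in
/-- `negDistN N S x = -d_N(x, S)` for a norm-like function `N`, `−∞` if `S = ∅`. -/
def negDistN {E : Type*} [NormedAddCommGroup E] (N : E → ℝ) (S : Set E) (x : E) : EReal :=
  if S.Nonempty then (↑(-sInf ((fun y => N (x - y)) '' S)) : EReal) else ⊥

open Classical in
/-- `negLogDistN N S x = -ln d_N(x, S)`, `−∞` if `S = ∅` (as `-ln(+∞) = −∞`). -/
def negLogDistN {E : Type*} [NormedAddCommGroup E] (N : E → ℝ) (S : Set E) (x : E) : EReal :=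
  if S.Nonempty then (↑(-Real.log (sInf ((fun y => N (x - y)) '' S))) : EReal) else ⊥

/-!
For `q + 1 ≥ dim E` the only `(q+1)`-plane is `E` itself, so real `q`-convexity reduces to upper
semicontinuity plus the maximum principle against affine functions `l` on closed balls.

Each function is `-d` or `-log d` with `d x = inf_{y ∈ S x} p (x - y)` for a seminorm `p` and
boundary points `S x` (all of `∂ω`, or those on the line through `x` in direction `v`), and
`-d ≤ l`, `-log d ≤ l` both read `k ∘ l ≤ d` for a convex `k`. Given `x` in the ball and
`y ∈ S x` outside it, along the line `τ ↦ x + τ (y - x)` the function `p (· - y)` equals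
`(1 - τ) p (x - y)`, which is affine for `τ ≤ 1`; the line leaves the ball at some `τ₁ ≤ 0` and
`τ₂ ∈ [0, 1]`, where `y` is still admissible, and convexity of `k ∘ l` along the line transports
`k ∘ l ≤ p (· - y)` from `τ₁, τ₂` to `τ = 0`. The infimum over `y` gives the maximum principle.

For a fixed set `d` is continuous; the directional distance (`∞` when the line misses `∂ω`) is
lower semicontinuous because a compact segment inside `ω` stays inside `ω` when moved slightly.
-/

open Topology Module AffineMap

section

variable {E : Type*} [NormedAddCommGroup E] [NormedSpace ℝ E]

def AffineMaxPrincipleOn (u : E → EReal) (ω : Set E) : Prop :=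
  ∀ (c : E) (r : ℝ), closedBall c r ⊆ ω → ∀ l : E →ᵃ[ℝ] ℝ,
    (∀ z ∈ sphere c r, u z ≤ l z) → ∀ x ∈ closedBall c r, u x ≤ l x

theorem realQConvexOn_of_affineMaxPrincipleOn [FiniteDimensional ℝ E] {q : ℕ}
    (hq : finrank ℝ E ≤ q + 1) {u : E → EReal} {ω : Set E} (htop : ∀ x ∈ ω, u x ≠ ⊤)
    (husc : UpperSemicontinuousOn u ω) (hmax : AffineMaxPrincipleOn u ω) :
    RealQConvexOn q u ω := by
  refine ⟨htop, husc, fun P hP c r hr hcω l hl x hx => ?_⟩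
  have hP_univ : (P : Set E) = univ := by
    obtain ⟨p, hp⟩ : (P : Set E).Nonempty :=
      P.eq_bot_or_nonempty.resolve_left fun hbot => by
        subst hbot
        rw [AffineSubspace.direction_bot, finrank_bot] at hP
        omega
    have hdir : P.direction = ⊤ :=
      Submodule.eq_top_of_finrank_eq ((Submodule.finrank_le _).antisymm (hq.trans hP.ge))
    rw [(AffineSubspace.direction_eq_top_iff_of_nonempty ⟨p, hp⟩).1 hdir, AffineSubspace.top_coe]
  rw [closure_ball c hr.ne'] at hcω
  simp only [hP_univ, inter_univ] at hl hx
  exact hmax c r hcω l hl x hx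

theorem exists_mem_Icc_lineMap_mem_sphere {c x y : E} {r : ℝ} (hx : x ∈ closedBall c r)
    (hy : y ∉ closedBall c r) : ∃ τ ∈ Icc (0 : ℝ) 1, lineMap x y τ ∈ sphere c r := by
  rw [mem_closedBall] at hx
  rw [mem_closedBall, not_le] at hy
  have hivt := intermediate_value_Icc zero_le_one (f := fun τ : ℝ => dist (lineMap x y τ) c)
    (lineMap_continuous.dist continuous_const).continuousOn
  obtain ⟨τ, hτ, hτr⟩ := hivt ⟨by simpa using hx, by simpa using hy.le⟩
  exact ⟨τ, hτ, mem_sphere.2 hτr⟩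

theorem exists_nonpos_lineMap_mem_sphere {c x y : E} {r : ℝ} (hx : x ∈ closedBall c r)
    (hxy : x ≠ y) : ∃ τ ≤ (0 : ℝ), lineMap x y τ ∈ sphere c r := by
  have hbound (τ : ℝ) : |τ| * dist x y + -dist x c ≤ dist (lineMap x y τ) c := by
    have := dist_triangle (lineMap x y τ) c x
    rw [dist_lineMap_left, Real.norm_eq_abs, dist_comm c x] at this
    linarith
  have htend : Tendsto (fun τ : ℝ => dist (lineMap x y τ) c) atBot atTop :=
    tendsto_atTop_mono hbound <| tendsto_atTop_add_const_right _ _ <|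
      tendsto_abs_atBot_atTop.atTop_mul_const (dist_pos.2 hxy)
  obtain ⟨τ, hτ, hτr⟩ := intermediate_value_Iic' (a := 0)
    (lineMap_continuous.dist continuous_const).continuousOn htend
    (show dist (lineMap x y (0 : ℝ)) c ≤ r by simpa using hx)
  exact ⟨τ, hτ, mem_sphere.2 hτr⟩

theorem le_seminorm_sub_of_forall_lineMap_mem_sphere {k : ℝ → ℝ} (hk : ConvexOn ℝ univ k)
    (p : Seminorm ℝ E) (l : E →ᵃ[ℝ] ℝ) {c x y : E} {r : ℝ} (hx : x ∈ closedBall c r)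
    (hy : y ∉ closedBall c r)
    (h : ∀ τ : ℝ, lineMap x y τ ∈ sphere c r → k (l (lineMap x y τ)) ≤ p (lineMap x y τ - y)) :
    k (l x) ≤ p (x - y) := by
  obtain ⟨τ₁, hτ₁, h₁⟩ := exists_nonpos_lineMap_mem_sphere hx (ne_of_mem_of_not_mem hx hy)
  obtain ⟨τ₂, ⟨hτ₂, hτ₂'⟩, h₂⟩ := exists_mem_Icc_lineMap_mem_sphere hx hy
  set g : ℝ → ℝ := fun τ => k (l (lineMap x y τ)) + τ * p (x - y)
  have hg : ConvexOn ℝ univ g :=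
    (hk.comp_affineMap (l.comp (lineMap x y))).add
      ((LinearMap.id.smulRight (p (x - y))).convexOn convex_univ)
  have hg_le (τ : ℝ) (hτ : τ ≤ 1) (hsph : lineMap x y τ ∈ sphere c r) : g τ ≤ p (x - y) := by
    have := h τ hsph
    rw [← vsub_eq_sub, lineMap_vsub_right, vsub_eq_sub, map_smul_eq_mul, Real.norm_eq_abs,
      abs_of_nonneg (sub_nonneg.2 hτ)] at this
    simp only [g]
    linarith
  have h0 : (0 : ℝ) ∈ segment ℝ τ₁ τ₂ := by
    rw [segment_eq_Icc (hτ₁.trans hτ₂)]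
    exact ⟨hτ₁, hτ₂⟩
  have := hg.le_on_segment (mem_univ _) (mem_univ _) h0
  simp only [g, lineMap_apply_zero, zero_mul, add_zero] at this
  exact this.trans (max_le (hg_le τ₁ (by linarith) h₁) (hg_le τ₂ hτ₂' h₂))

end

namespace Seminorm

variable {E : Type*} [NormedAddCommGroup E] [NormedSpace ℝ E] (p : Seminorm ℝ E)

/-- The distance from `x` to `S` measured by `p`; it is `0` (not `∞`) when `S = ∅`. -/
def infDist (x : E) (S : Set E) : ℝ :=
  sInf ((fun y => p (x - y)) '' S)

theorem infDist_le {x y : E} {S : Set E} (hy : y ∈ S) : p.infDist x S ≤ p (x - y) :=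
  csInf_le ⟨0, forall_mem_image.2 fun _ _ => apply_nonneg _ _⟩ (mem_image_of_mem _ hy)

theorem le_infDist {x : E} {S : Set E} (hS : S.Nonempty) {a : ℝ} :
    a ≤ p.infDist x S ↔ ∀ y ∈ S, a ≤ p (x - y) :=
  ⟨fun h _ hy => h.trans (p.infDist_le hy), fun h => le_csInf (hS.image _) (forall_mem_image.2 h)⟩

theorem infDist_le_infDist_add {S : Set E} (hS : S.Nonempty) (x x' : E) :
    p.infDist x S ≤ p.infDist x' S + p (x - x') := by
  rw [← sub_le_iff_le_add, p.le_infDist hS]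
  intro y hy
  have := map_add_le_add p (x - x') (x' - y)
  rw [sub_add_sub_cancel] at this
  linarith [p.infDist_le (x := x) hy]

theorem continuous_infDist (hp : Continuous p) {S : Set E} (hS : S.Nonempty) :
    Continuous (p.infDist · S) := by
  refine continuous_iff_continuousAt.2 fun x => ?_
  rw [ContinuousAt, tendsto_iff_dist_tendsto_zero]
  have hpx : Tendsto (fun x' => p (x' - x)) (𝓝 x) (𝓝 0) := by
    simpa [Function.comp_def] using (hp.comp (continuous_sub_right x)).tendsto x
  refine squeeze_zero (fun _ => dist_nonneg) (fun x' => ?_) hpx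
  rw [Real.dist_eq, abs_sub_le_iff]
  constructor
  · linarith [p.infDist_le_infDist_add hS x' x]
  · linarith [p.infDist_le_infDist_add hS x x', map_sub_rev p x x']

theorem continuous_of_finiteDimensional [FiniteDimensional ℝ E] : Continuous p :=
  continuousOn_univ.1 (p.convexOn.continuousOn isOpen_univ)

theorem exists_pos_mul_norm_le [FiniteDimensional ℝ E] (hp : ∀ x, p x = 0 → x = 0) :
    ∃ c > 0, ∀ w, c * ‖w‖ ≤ p w := by
  obtain ⟨c, hc, hcp⟩ := (isCompact_sphere (0 : E) 1).exists_forall_le'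
    p.continuous_of_finiteDimensional.continuousOn fun w hw =>
      (apply_nonneg p w).lt_of_ne' fun h => by simp [hp w h] at hw
  refine ⟨c, hc, fun w => ?_⟩
  rcases eq_or_ne w 0 with rfl | hw
  · simp
  have hw' : 0 < ‖w‖ := norm_pos_iff.2 hw
  have := hcp (‖w‖⁻¹ • w) (by simp [norm_smul, hw'.ne'])
  rwa [map_smul_eq_mul, norm_inv, norm_norm, le_inv_mul_iff₀ hw', mul_comm] at this

theorem infDist_pos [FiniteDimensional ℝ E] (hp : ∀ x, p x = 0 → x = 0) {x : E} {S : Set E}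
    (hS : S.Nonempty) (hx : x ∉ closure S) : 0 < p.infDist x S := by
  obtain ⟨c, hc, hcp⟩ := p.exists_pos_mul_norm_le hp
  have hd : 0 < Metric.infDist x S := (infDist_pos_iff_notMem_closure hS).1 hx
  refine (mul_pos hc hd).trans_le ((p.le_infDist hS).2 fun y hy => ?_)
  calc c * Metric.infDist x S ≤ c * ‖x - y‖ := by
        rw [← dist_eq_norm]
        exact mul_le_mul_of_nonneg_left (infDist_le_dist_of_mem hy) hc.le
    _ ≤ p (x - y) := hcp _

theorem infDist_normSeminorm (x : E) (S : Set E) :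
    (normSeminorm ℝ E).infDist x S = Metric.infDist x S := by
  simp [infDist, Metric.infDist_eq_iInf, sInf_image', dist_eq_norm]

end Seminorm

theorem notMem_closure_of_subset_frontier {X : Type*} [TopologicalSpace X] {ω S : Set X}
    (hω : IsOpen ω) {x : X} (hx : x ∈ ω) (hS : S ⊆ frontier ω) : x ∉ closure S := fun hxS =>
  disjoint_left.1 (disjoint_frontier_iff_isOpen.2 hω) (closure_minimal hS isClosed_frontier hxS) hx

section

variable {E : Type*} [NormedAddCommGroup E]

theorem negDistN_ne_top (N : E → ℝ) (S : Set E) (x : E) : negDistN N S x ≠ ⊤ := by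
  unfold negDistN
  split_ifs <;> simp

theorem negLogDistN_ne_top (N : E → ℝ) (S : Set E) (x : E) : negLogDistN N S x ≠ ⊤ := by
  unfold negLogDistN
  split_ifs <;> simp

theorem negDistE_eq_neg_infEDist (S : Set E) (x : E) :
    negDistE S x = -(infEDist x S : EReal) := by
  rcases S.eq_empty_or_nonempty with rfl | hS
  · simp [negDistE]
  · rw [negDistE, if_pos hS, infDist, ← ENNReal.ofReal_toReal (infEDist_ne_top hS),
      EReal.coe_ennreal_ofReal, max_eq_left ENNReal.toReal_nonneg,
      ENNReal.toReal_ofReal ENNReal.toReal_nonneg]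
    rfl

theorem negLogDistE_eq_neg_log_infEDist {S : Set E} {x : E} (hx : x ∉ closure S) :
    negLogDistE S x = -ENNReal.log (infEDist x S) := by
  rcases S.eq_empty_or_nonempty with rfl | hS
  · simp [negLogDistE]
  · have hpos : 0 < (infEDist x S).toReal := (infDist_pos_iff_notMem_closure hS).1 hx
    rw [negLogDistE, if_pos hS, ← ENNReal.ofReal_toReal (infEDist_ne_top hS),
      ENNReal.log_ofReal_of_pos hpos]
    rfl

end

section

variable {E : Type*} [NormedAddCommGroup E] [NormedSpace ℝ E]

theorem negDistN_le_coe_iff {p : Seminorm ℝ E} {S : Set E} {x : E} {a : ℝ} :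
    negDistN p S x ≤ a ↔ (S.Nonempty → -a ≤ p.infDist x S) := by
  by_cases hS : S.Nonempty
  · rw [negDistN, if_pos hS, EReal.coe_le_coe_iff]
    exact ⟨fun h _ => neg_le.1 h, fun h => neg_le.1 (h hS)⟩
  · simp [negDistN, hS]

theorem negLogDistN_le_coe_iff {p : Seminorm ℝ E} {S : Set E} {x : E} {a : ℝ}
    (hpos : S.Nonempty → 0 < p.infDist x S) :
    negLogDistN p S x ≤ a ↔ (S.Nonempty → Real.exp (-a) ≤ p.infDist x S) := by
  by_cases hS : S.Nonempty
  · rw [negLogDistN, if_pos hS, EReal.coe_le_coe_iff]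
    have hlog := Real.le_log_iff_exp_le (x := -a) (hpos hS)
    exact ⟨fun h _ => hlog.1 (neg_le.1 h), fun h => neg_le.1 (hlog.2 (h hS))⟩
  · simp [negLogDistN, hS]

theorem negDistE_eq_negDistN (S : Set E) : negDistE S = negDistN (normSeminorm ℝ E) S := by
  funext x
  rw [negDistE, ← Seminorm.infDist_normSeminorm]
  rfl

theorem negLogDistE_eq_negLogDistN (S : Set E) :
    negLogDistE S = negLogDistN (normSeminorm ℝ E) S := by
  funext x
  rw [negLogDistE, ← Seminorm.infDist_normSeminorm]
  rfl

theorem Seminorm.comp_le_infDist_of_forall_mem_sphere {k : ℝ → ℝ} (hk : ConvexOn ℝ univ k)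
    (p : Seminorm ℝ E) {S : E → Set E} (hS : ∀ x, ∀ y ∈ S x, ∀ τ : ℝ, y ∈ S (lineMap x y τ))
    {c : E} {r : ℝ} (hSc : ∀ x, Disjoint (S x) (Metric.closedBall c r)) (l : E →ᵃ[ℝ] ℝ)
    (hl : ∀ z ∈ Metric.sphere c r, (S z).Nonempty → k (l z) ≤ p.infDist z (S z))
    {x : E} (hx : x ∈ Metric.closedBall c r) (hSx : (S x).Nonempty) :
    k (l x) ≤ p.infDist x (S x) := by
  refine (p.le_infDist hSx).2 fun y hy => ?_
  refine le_seminorm_sub_of_forall_lineMap_mem_sphere hk p l hx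
    (disjoint_left.1 (hSc x) hy) fun τ hτ => ?_
  exact (hl _ hτ ⟨y, hS x y hy τ⟩).trans (p.infDist_le (hS x y hy τ))

theorem affineMaxPrincipleOn_negDistN (p : Seminorm ℝ E) {S : E → Set E}
    (hS : ∀ x, ∀ y ∈ S x, ∀ τ : ℝ, y ∈ S (lineMap x y τ)) {ω : Set E}
    (hSω : ∀ x, Disjoint (S x) ω) : AffineMaxPrincipleOn (fun x => negDistN p (S x) x) ω := by
  intro c r hcω l hl x hx
  simp only [negDistN_le_coe_iff] at hl ⊢
  exact p.comp_le_infDist_of_forall_mem_sphere (k := fun t => -t) (concaveOn_id convex_univ).neg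
    hS (fun x => (hSω x).mono_right hcω) l hl hx

theorem affineMaxPrincipleOn_negLogDistN (p : Seminorm ℝ E) {S : E → Set E}
    (hS : ∀ x, ∀ y ∈ S x, ∀ τ : ℝ, y ∈ S (lineMap x y τ)) {ω : Set E}
    (hSω : ∀ x, Disjoint (S x) ω) (hpos : ∀ x ∈ ω, (S x).Nonempty → 0 < p.infDist x (S x)) :
    AffineMaxPrincipleOn (fun x => negLogDistN p (S x) x) ω := by
  intro c r hcω l hl x hx
  rw [negLogDistN_le_coe_iff (hpos x (hcω hx))]
  refine p.comp_le_infDist_of_forall_mem_sphere (k := fun t => Real.exp (-t))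
    (convexOn_exp.comp_linearMap (-LinearMap.id)) hS (fun x => (hSω x).mono_right hcω) l
    (fun z hz => ?_) hx
  exact (negLogDistN_le_coe_iff (hpos z (hcω (sphere_subset_closedBall hz)))).1 (hl z hz)

theorem continuous_negDistN {p : Seminorm ℝ E} (hp : Continuous p) (F : Set E) :
    Continuous (fun x => negDistN p F x) := by
  by_cases hF : F.Nonempty
  · simp only [negDistN, if_pos hF]
    exact continuous_coe_real_ereal.comp (p.continuous_infDist hp hF).neg
  · simp only [negDistN, if_neg hF]
    exact continuous_const

theorem continuousOn_negLogDistN {p : Seminorm ℝ E} (hp : Continuous p) {F ω : Set E}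
    (hpos : ∀ x ∈ ω, F.Nonempty → 0 < p.infDist x F) :
    ContinuousOn (fun x => negLogDistN p F x) ω := by
  by_cases hF : F.Nonempty
  · simp only [negLogDistN, if_pos hF]
    exact continuous_coe_real_ereal.comp_continuousOn
      ((p.continuous_infDist hp hF).continuousOn.log fun x hx => (hpos x hx hF).ne').neg
  · simp only [negLogDistN, if_neg hF]
    exact continuousOn_const

end

section

variable {E : Type*} [NormedAddCommGroup E] [NormedSpace ℝ E]

def lineThrough (x v : E) : Set E :=
  {y | ∃ t : ℝ, y = x + t • v}

theorem lineThrough_eq_mk' (x v : E) : lineThrough x v = AffineSubspace.mk' x (ℝ ∙ v) := by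
  ext y
  simp [lineThrough, AffineSubspace.mem_mk', Submodule.mem_span_singleton, eq_sub_iff_add_eq',
    eq_comm]

theorem isClosed_lineThrough (x v : E) : IsClosed (lineThrough x v) := by
  have : FiniteDimensional ℝ (AffineSubspace.mk' x (ℝ ∙ v)).direction := by
    rw [AffineSubspace.direction_mk']
    infer_instance
  exact lineThrough_eq_mk' x v ▸ AffineSubspace.closed_of_finiteDimensional _

theorem convex_lineThrough (x v : E) : Convex ℝ (lineThrough x v) :=
  lineThrough_eq_mk' x v ▸ AffineSubspace.convex _

theorem mem_lineThrough_lineMap {x y v : E} (hy : y ∈ lineThrough x v) (τ : ℝ) :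
    y ∈ lineThrough (lineMap x y τ) v := by
  obtain ⟨t, rfl⟩ := hy
  exact ⟨(1 - τ) * t, by rw [lineMap_apply_module]; module⟩

theorem lowerSemicontinuousOn_infEDist_frontier_inter_lineThrough [ProperSpace E] {ω : Set E}
    (hω : IsOpen ω) (v : E) :
    LowerSemicontinuousOn (fun x => infEDist x (frontier ω ∩ lineThrough x v)) ω := by
  intro x₀ hx₀ m hm
  obtain ⟨M, hM, hmM, hMx₀⟩ := ENNReal.lt_iff_exists_real_btwn.1 hm
  set K := closedBall x₀ M ∩ lineThrough x₀ v
  -- `K` misses `frontier ω`, so by connectedness it lies in `ω`, and by compactness so does a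
  -- uniform neighbourhood of it.
  have hKω : K ⊆ ω := by
    refine ((convex_closedBall _ _).inter (convex_lineThrough _ _)).isPreconnected
      |>.subset_of_closure_inter_subset hω ⟨x₀, ⟨mem_closedBall_self hM, 0, by simp⟩, hx₀⟩ ?_
    rintro y ⟨hyω, hyM, hyL⟩
    by_contra hy
    have hfar := hMx₀.trans_le (infEDist_le_edist_of_mem ⟨hω.frontier_eq ▸ ⟨hyω, hy⟩, hyL⟩)
    rw [edist_dist, ENNReal.ofReal_lt_ofReal_iff_of_nonneg hM, dist_comm] at hfar
    exact hfar.not_ge hyM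
  obtain ⟨δ, hδ, hδω⟩ := ((isCompact_closedBall x₀ M).inter_right
    (isClosed_lineThrough x₀ v)).exists_thickening_subset_open hω hKω
  filter_upwards [nhdsWithin_le_nhds (ball_mem_nhds x₀ hδ)] with x hx
  refine hmM.trans_le (le_infEDist.2 fun y ⟨hyF, t, hy⟩ => ?_)
  by_contra! hyx
  rw [edist_lt_ofReal, hy, dist_comm, dist_self_add_left] at hyx
  have hyK : x₀ + t • v ∈ K := ⟨by rw [mem_closedBall, dist_self_add_left]; exact hyx.le, t, rfl⟩
  have hyω : y ∈ ω := hδω (mem_thickening_iff.2 ⟨x₀ + t • v, hyK, by rwa [hy, dist_add_right]⟩)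
  exact disjoint_left.1 (disjoint_frontier_iff_isOpen.2 hω) hyF hyω

theorem upperSemicontinuousOn_negDistE_frontier_inter_lineThrough [ProperSpace E] {ω : Set E}
    (hω : IsOpen ω) (v : E) :
    UpperSemicontinuousOn (fun x => negDistE (frontier ω ∩ lineThrough x v) x) ω := by
  simp only [negDistE_eq_neg_infEDist]
  exact (continuous_neg.comp continuous_coe_ennreal_ereal).comp_lowerSemicontinuousOn_antitone
    (lowerSemicontinuousOn_infEDist_frontier_inter_lineThrough hω v) fun a b hab =>
      EReal.neg_le_neg_iff.2 (EReal.coe_ennreal_le_coe_ennreal_iff.2 hab)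

theorem upperSemicontinuousOn_negLogDistE_frontier_inter_lineThrough [ProperSpace E]
    {ω : Set E} (hω : IsOpen ω) (v : E) :
    UpperSemicontinuousOn (fun x => negLogDistE (frontier ω ∩ lineThrough x v) x) ω := by
  have husc := (continuous_neg.comp ENNReal.continuous_log).comp_lowerSemicontinuousOn_antitone
    (lowerSemicontinuousOn_infEDist_frontier_inter_lineThrough hω v) fun a b hab =>
      EReal.neg_le_neg_iff.2 (ENNReal.log_monotone hab)
  refine fun x hx => UpperSemicontinuousWithinAt.congr_of_eventuallyEq (husc x hx) hx <|
    eventually_nhdsWithin_of_forall fun z hz => ?_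
  exact (negLogDistE_eq_neg_log_infEDist
    (notMem_closure_of_subset_frontier hω hz inter_subset_left)).symm

variable [FiniteDimensional ℝ E] {q : ℕ} {ω : Set E}

theorem realQConvexOn_negDistN_frontier (hq : finrank ℝ E ≤ q + 1) (hω : IsOpen ω)
    (p : Seminorm ℝ E) :
    RealQConvexOn q (fun x => negDistN p (frontier ω) x) ω :=
  realQConvexOn_of_affineMaxPrincipleOn hq (fun x _ => negDistN_ne_top _ _ x)
    (continuous_negDistN p.continuous_of_finiteDimensional _).continuousOn.upperSemicontinuousOn
    (affineMaxPrincipleOn_negDistN p (fun _ _ hy _ => hy)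
      fun _ => disjoint_frontier_iff_isOpen.2 hω)

theorem realQConvexOn_negLogDistN_frontier (hq : finrank ℝ E ≤ q + 1) (hω : IsOpen ω)
    (p : Seminorm ℝ E) (hp : ∀ x, p x = 0 → x = 0) :
    RealQConvexOn q (fun x => negLogDistN p (frontier ω) x) ω := by
  have hpos (x : E) (hx : x ∈ ω) (hF : (frontier ω).Nonempty) : 0 < p.infDist x (frontier ω) :=
    p.infDist_pos hp hF (notMem_closure_of_subset_frontier hω hx subset_rfl)
  exact realQConvexOn_of_affineMaxPrincipleOn hq (fun x _ => negLogDistN_ne_top _ _ x)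
    (continuousOn_negLogDistN p.continuous_of_finiteDimensional hpos).upperSemicontinuousOn
    (affineMaxPrincipleOn_negLogDistN p (fun _ _ hy _ => hy)
      (fun _ => disjoint_frontier_iff_isOpen.2 hω) hpos)

theorem realQConvexSet_of_isOpen (hq : finrank ℝ E ≤ q + 1) (hω : IsOpen ω) :
    RealQConvexSet q ω := by
  refine ⟨hω, ?_⟩
  simp only [negLogDistE_eq_negLogDistN]
  exact realQConvexOn_negLogDistN_frontier hq hω _ fun x hx => norm_eq_zero.1 (by simpa using hx)

theorem realQConvexOn_negDistE_frontier_inter_lineThrough (hq : finrank ℝ E ≤ q + 1)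
    (hω : IsOpen ω) (v : E) :
    RealQConvexOn q (fun x => negDistE (frontier ω ∩ lineThrough x v) x) ω := by
  refine realQConvexOn_of_affineMaxPrincipleOn hq (fun x _ => ?_)
    (upperSemicontinuousOn_negDistE_frontier_inter_lineThrough hω v) ?_ <;>
    simp only [negDistE_eq_negDistN]
  · exact negDistN_ne_top _ _ x
  · exact affineMaxPrincipleOn_negDistN (S := fun x => frontier ω ∩ lineThrough x v) _
      (fun _ _ hy τ => ⟨hy.1, mem_lineThrough_lineMap hy.2 τ⟩)
      fun _ => (disjoint_frontier_iff_isOpen.2 hω).mono_left inter_subset_left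

theorem realQConvexOn_negLogDistE_frontier_inter_lineThrough (hq : finrank ℝ E ≤ q + 1)
    (hω : IsOpen ω) (v : E) :
    RealQConvexOn q (fun x => negLogDistE (frontier ω ∩ lineThrough x v) x) ω := by
  refine realQConvexOn_of_affineMaxPrincipleOn hq (fun x _ => ?_)
    (upperSemicontinuousOn_negLogDistE_frontier_inter_lineThrough hω v) ?_ <;>
    simp only [negLogDistE_eq_negLogDistN]
  · exact negLogDistN_ne_top _ _ x
  · refine affineMaxPrincipleOn_negLogDistN (S := fun x => frontier ω ∩ lineThrough x v) _
      (fun _ _ hy τ => ⟨hy.1, mem_lineThrough_lineMap hy.2 τ⟩)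
      (fun _ => (disjoint_frontier_iff_isOpen.2 hω).mono_left inter_subset_left)
      fun x hx hS => ?_
    rw [Seminorm.infDist_normSeminorm]
    exact (infDist_pos_iff_notMem_closure hS).1
      (notMem_closure_of_subset_frontier hω hx inter_subset_left)

end

theorem negDist_realQConvexOn_general {n : ℕ}
    (ω : Set (EuclideanSpace ℝ (Fin n))) (hω : IsOpen ω)
    (v : EuclideanSpace ℝ (Fin n))
    (N : EuclideanSpace ℝ (Fin n) → ℝ)
    (hN0 : ∀ x, N x = 0 ↔ x = 0)
    (hNs : ∀ (a : ℝ) (x), N (a • x) = |a| * N x)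
    (hNt : ∀ x y, N (x + y) ≤ N x + N y) :
    RealQConvexOn (n - 1)
      (fun x => negDistE (frontier ω ∩ {y | ∃ t : ℝ, y = x + t • v}) x) ω ∧
    RealQConvexOn (n - 1) (fun x => negDistN N (frontier ω) x) ω ∧
    RealQConvexOn (n - 1)
      (fun x => negLogDistE (frontier ω ∩ {y | ∃ t : ℝ, y = x + t • v}) x) ω ∧
    RealQConvexOn (n - 1) (fun x => negLogDistN N (frontier ω) x) ω ∧
    (∀ ω' : Set (EuclideanSpace ℝ (Fin n)), IsOpen ω' → RealQConvexSet (n - 1) ω') := by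
  have hq : finrank ℝ (EuclideanSpace ℝ (Fin n)) ≤ n - 1 + 1 := by
    rw [finrank_euclideanSpace_fin]
    omega
  let p : Seminorm ℝ (EuclideanSpace ℝ (Fin n)) :=
    Seminorm.of N hNt fun a x => by rw [hNs, Real.norm_eq_abs]
  exact ⟨realQConvexOn_negDistE_frontier_inter_lineThrough hq hω v,
    realQConvexOn_negDistN_frontier hq hω p,
    realQConvexOn_negLogDistE_frontier_inter_lineThrough hq hω v,
    realQConvexOn_negLogDistN_frontier hq hω p fun x => (hN0 x).1,
    fun _ hω' => realQConvexSet_of_isOpen hq hω'⟩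

/-- For a nonempty proper open set `ω ⊆ ℝⁿ`, a unit vector `v` and an arbitrary norm `N`
on `ℝⁿ`, the four functions `-R_v(·,∂ω)`, `-d_N(·,∂ω)`, `-ln R_v(·,∂ω)` and
`-ln d_N(·,∂ω)` are all real (n−1)-convex on `ω`; in particular, every open set in `ℝⁿ`
is a real (n−1)-convex set. -/
theorem negDist_realQConvexOn {n : ℕ} (hn : 1 ≤ n)
    (ω : Set (EuclideanSpace ℝ (Fin n))) (hω : IsOpen ω)
    (hne : ω.Nonempty) (hproper : ω ≠ Set.univ)
    (v : EuclideanSpace ℝ (Fin n)) (hv : ‖v‖ = 1)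
    (N : EuclideanSpace ℝ (Fin n) → ℝ)
    (hN0 : ∀ x, N x = 0 ↔ x = 0)
    (hNs : ∀ (a : ℝ) (x), N (a • x) = |a| * N x)
    (hNt : ∀ x y, N (x + y) ≤ N x + N y) :
    RealQConvexOn (n - 1)
      (fun x => negDistE (frontier ω ∩ {y | ∃ t : ℝ, y = x + t • v}) x) ω ∧
    RealQConvexOn (n - 1) (fun x => negDistN N (frontier ω) x) ω ∧
    RealQConvexOn (n - 1)
      (fun x => negLogDistE (frontier ω ∩ {y | ∃ t : ℝ, y = x + t • v}) x) ω ∧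
    RealQConvexOn (n - 1) (fun x => negLogDistN N (frontier ω) x) ω ∧
    (∀ ω' : Set (EuclideanSpace ℝ (Fin n)), IsOpen ω' → RealQConvexSet (n - 1) ω') :=
  negDist_realQConvexOn_general ω hω v N hN0 hNs hNt
end
end
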